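/- arXiv:1311.0332 — 9 statements merged into one kernel-verified Lean document; each statement's English description precedes it below -/
import Mathlib

section
/- For all positive integers n and k, Σ over pairs (σ,v) with n dividing σ and v even of p(n,σ,v,k), minus Σ over pairs (σ,v) with n dividing σ and v odd of p(n,σ,v,k), equals n^{k−1}·φ(n), where φ is Euler's totient function. -/
/-!
The difference of the two sums is the signed count `∑_A [n ∣ ∑ A] (-1)^|A|` over subsets `A` of
`{1,…,n-1} × {0,…,k-1}`. Detecting `n ∣ ∑ A` with a primitive `n`-th root of unity `η` gives
`n · (signed count) = ∑_{d<n} ∏_{(j,c)} (1 - η^{dj}) = ∑_{d<n} (∏_{j=1}^{n-1} (1 - η^{dj}))^k`.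
The inner product is `n` when `gcd(n, d) = 1`, since `η^d` is then again primitive, and `0`
otherwise, because the factor `j = n / gcd(n, d)` vanishes. This leaves `φ(n) n^k`.
-/

/-- `p n σ v k` is the number of ways `σ` can be written as a sum of `v` elements chosen
from the multiset in which every integer between `1` and `n-1` appears exactly `k` times:
we count subsets `A` of `{1,…,n-1} × {0,…,k-1}` (the second coordinate labelling copies)
of size `v` whose first coordinates sum to `σ`. -/
def p (n σ v k : ℕ) : ℕ :=
  (((Finset.Ico 1 n) ×ˢ (Finset.range k)).powerset.filter
    (fun A => A.card = v ∧ ∑ e ∈ A, e.1 = σ)).card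

open Finset

theorem tsum_tsum_ite_card_filter {α : Type*} (s : Finset α) (f g : α → ℕ)
    (P : ℕ → ℕ → Prop) [DecidableRel P] :
    ∑' x : ℕ, ∑' y : ℕ, (if P x y then (#{a ∈ s | g a = y ∧ f a = x} : ℤ) else 0) =
      #{a ∈ s | P (f a) (g a)} := by
  have hfibre : ∀ x y, (if P x y then (#{a ∈ s | g a = y ∧ f a = x} : ℤ) else 0) =
      ∑ a ∈ s, if y = g a then (if x = f a then (if P (f a) (g a) then 1 else 0) else 0)
        else 0 := by
    intro x y
    rw [card_filter, Nat.cast_sum]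
    split_ifs
    · refine sum_congr rfl fun a _ => ?_
      by_cases hy : y = g a <;> by_cases hx : x = f a <;> simp_all [eq_comm]
    · refine (sum_eq_zero fun a _ => ?_).symm
      by_cases hy : y = g a <;> by_cases hx : x = f a <;> simp_all
  simp_rw [hfibre]
  rw [card_filter, Nat.cast_sum]
  calc _ = ∑' x : ℕ, ∑ a ∈ s, if x = f a then (if P (f a) (g a) then (1 : ℤ) else 0) else 0 := by
        refine tsum_congr fun x => ?_
        rw [Summable.tsum_finsetSum fun a _ => (hasSum_ite_eq (g a) _).summable]
        exact sum_congr rfl fun a _ => tsum_ite_eq _ _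
    _ = _ := by
        rw [Summable.tsum_finsetSum fun a _ => (hasSum_ite_eq (f a) _).summable]
        push_cast
        exact sum_congr rfl fun a _ => tsum_ite_eq _ _

theorem Finset.card_filter_even_sub_card_filter_odd {α : Type*} (s : Finset α) (Q : α → Prop)
    [DecidablePred Q] (c : α → ℕ) :
    (#{a ∈ s | Q a ∧ Even (c a)} : ℤ) - #{a ∈ s | Q a ∧ Odd (c a)} =
      ∑ a ∈ s, if Q a then (-1) ^ c a else 0 := by
  simp only [card_filter, Nat.cast_sum, ← sum_sub_distrib]
  refine sum_congr rfl fun a _ => ?_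
  rcases Nat.even_or_odd (c a) with h | h
  · simp [h, h.neg_one_pow, Nat.not_odd_iff_even.mpr h]
  · by_cases hQ : Q a <;> simp [hQ, h, h.neg_one_pow, Nat.not_even_iff_odd.mpr h]

theorem Finset.sum_powerset_neg_one_pow_card_mul_prod {ι R : Type*} [CommRing R] [DecidableEq ι]
    (s : Finset ι) (f : ι → R) :
    ∑ t ∈ s.powerset, (-1) ^ #t * ∏ i ∈ t, f i = ∏ i ∈ s, (1 - f i) := by
  simp [prod_sub]

namespace IsPrimitiveRoot

variable {R : Type*} [CommRing R] [IsDomain R] {n : ℕ} {η : R}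

theorem sum_pow_mul_eq_ite (hη : IsPrimitiveRoot η n) (σ : ℕ) :
    ∑ d ∈ range n, η ^ (d * σ) = if n ∣ σ then (n : R) else 0 := by
  simp_rw [pow_mul']
  split_ifs with h
  · simp [(hη.pow_eq_one_iff_dvd σ).mpr h]
  · have hne : η ^ σ - 1 ≠ 0 := sub_ne_zero.mpr fun h1 => h ((hη.pow_eq_one_iff_dvd σ).mp h1)
    refine (mul_eq_zero.mp ?_).resolve_right hne
    rw [geom_sum_mul, ← pow_mul, mul_comm, pow_mul, hη.pow_eq_one, one_pow, sub_self]

theorem prod_Ico_one_sub_pow_eq_order (hη : IsPrimitiveRoot η n) (hn : 0 < n) :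
    ∏ j ∈ Ico 1 n, (1 - η ^ j) = n := by
  obtain ⟨m, rfl⟩ := Nat.exists_eq_add_of_lt hn
  rw [prod_Ico_eq_prod_range]
  simpa [add_comm 1] using prod_one_sub_pow_eq_order (n := m) (by simpa using hη)

theorem prod_Ico_one_sub_pow_mul_eq_ite (hη : IsPrimitiveRoot η n) (hn : 0 < n) (d : ℕ) :
    ∏ j ∈ Ico 1 n, (1 - η ^ (d * j)) = if n.Coprime d then (n : R) else 0 := by
  split_ifs with h
  · simp_rw [pow_mul]
    exact (hη.pow_of_coprime d h.symm).prod_Ico_one_sub_pow_eq_order hn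
  set g := n.gcd d
  have hgn : g ∣ n := Nat.gcd_dvd_left n d
  have hg1 : 1 < g := by
    have : 0 < g := Nat.gcd_pos_of_pos_left d hn
    have : g ≠ 1 := h
    omega
  have hmul : d * (n / g) = n * (d / g) := by
    calc d * (n / g) = d / g * g * (n / g) := by rw [Nat.div_mul_cancel (Nat.gcd_dvd_right n d)]
      _ = n * (d / g) := by rw [mul_assoc, Nat.mul_div_cancel' hgn, mul_comm]
  refine prod_eq_zero (i := n / g) ?_ ?_
  · rw [mem_Ico]
    exact ⟨Nat.div_pos (Nat.le_of_dvd hn hgn) (by omega), Nat.div_lt_self hn hg1⟩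
  · rw [hmul, pow_mul, hη.pow_eq_one, one_pow, sub_self]

theorem natCast_mul_sum_powerset_ite_dvd (hη : IsPrimitiveRoot η n) (hn : 0 < n) {k : ℕ}
    (hk : 0 < k) :
    (n : R) * ∑ A ∈ (Ico 1 n ×ˢ range k).powerset,
        (if n ∣ ∑ e ∈ A, e.1 then (-1 : R) ^ #A else 0) = n.totient * n ^ k := by
  calc (n : R) * ∑ A ∈ (Ico 1 n ×ˢ range k).powerset,
          (if n ∣ ∑ e ∈ A, e.1 then (-1 : R) ^ #A else 0)
      = ∑ A ∈ (Ico 1 n ×ˢ range k).powerset, (-1) ^ #A * ∑ d ∈ range n, η ^ (d * ∑ e ∈ A, e.1) := by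
        rw [mul_sum]
        refine sum_congr rfl fun A _ => ?_
        rw [hη.sum_pow_mul_eq_ite]
        split_ifs <;> ring
    _ = ∑ d ∈ range n, ∑ A ∈ (Ico 1 n ×ˢ range k).powerset, (-1) ^ #A * ∏ e ∈ A, η ^ (d * e.1) := by
        simp_rw [mul_sum, prod_pow_eq_pow_sum]
        exact sum_comm
    _ = ∑ d ∈ range n, (∏ j ∈ Ico 1 n, (1 - η ^ (d * j))) ^ k := by
        simp_rw [sum_powerset_neg_one_pow_card_mul_prod, prod_product, prod_const, card_range,
          prod_pow]
    _ = ∑ d ∈ range n, if n.Coprime d then (n : R) ^ k else 0 := by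
        simp_rw [hη.prod_Ico_one_sub_pow_mul_eq_ite hn, ite_pow, zero_pow hk.ne']
    _ = n.totient * n ^ k := by
        rw [← sum_filter, sum_const, ← Nat.totient_eq_card_coprime, nsmul_eq_mul]

end IsPrimitiveRoot

theorem sum_powerset_ite_dvd_eq_pow_mul_totient {n k : ℕ} (hn : 0 < n) (hk : 0 < k) :
    ∑ A ∈ (Ico 1 n ×ˢ range k).powerset, (if n ∣ ∑ e ∈ A, e.1 then (-1 : ℤ) ^ #A else 0) =
      n ^ (k - 1) * n.totient := by
  have key := (Complex.isPrimitiveRoot_exp n hn.ne').natCast_mul_sum_powerset_ite_dvd hn hk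
  have hpow : (n : ℂ) ^ k = n * n ^ (k - 1) := by rw [← pow_succ', Nat.sub_add_cancel hk]
  rw [hpow, mul_left_comm] at key
  exact_mod_cast (mul_left_cancel₀ (Nat.cast_ne_zero.mpr hn.ne') key).trans (mul_comm _ _)

theorem statement1 (n k : ℕ) (hn : 0 < n) (hk : 0 < k) :
    (∑' σ : ℕ, ∑' v : ℕ, if n ∣ σ ∧ Even v then (p n σ v k : ℤ) else 0) -
      (∑' σ : ℕ, ∑' v : ℕ, if n ∣ σ ∧ Odd v then (p n σ v k : ℤ) else 0) =
    (n : ℤ) ^ (k - 1) * (Nat.totient n : ℤ) := by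
  simp only [p, tsum_tsum_ite_card_filter]
  rw [card_filter_even_sub_card_filter_odd, sum_powerset_ite_dvd_eq_pow_mul_totient hn hk]
end

section
/- Let M be a non-empty finite set of positive integers and let n be a positive integer that does not divide any element of M. Then there exist finite sets X and Y of non-negative integers which are residue equivalent for M and not residue equivalent for {n}. -/
/-!
Fix a primitive `n`-th root of unity `ζ` and weigh a finite set `X` by `∑ x ∈ X, ζ ^ x`; this
weight only depends on the residues of `X` modulo `n`. Starting from `X = {0}`, `Y = ∅`, treat
the moduli `m ∈ M` one at a time: choose a multiple `t` of `m` exceeding every element so far with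
`t ≡ m [MOD n]`, and replace `(X, Y)` by `(X ∪ (Y + t), Y ∪ (X + t))`. Residues modulo `m` and
modulo the earlier moduli stay balanced, while the difference of the weights gets multiplied by
`1 - ζ ^ t = 1 - ζ ^ m ≠ 0` because `n ∤ m`.
-/

/-- Finite sets `X` and `Y` of non-negative integers are residue equivalent for a set `M`
of positive integers if for every `m ∈ M` and every `r` with `0 ≤ r < m`, the number of
elements of `X` congruent to `r` mod `m` equals the number of elements of `Y` congruent
to `r` mod `m`. -/
def ResidueEquiv (X Y : Finset ℕ) (M : Set ℕ) : Prop :=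
  ∀ m ∈ M, ∀ r < m,
    (X.filter (fun x => x % m = r)).card = (Y.filter (fun y => y % m = r)).card

open Finset

lemma residueEquiv_of_map_mod_eq {X Y : Finset ℕ} {M : Set ℕ}
    (h : ∀ m ∈ M, X.val.map (· % m) = Y.val.map (· % m)) : ResidueEquiv X Y M := by
  intro m hm r _
  have hcount := congrArg (Multiset.count r) (h m hm)
  simpa [Multiset.count_map, Finset.card_def, Finset.filter_val, eq_comm] using hcount

section RootOfUnity

variable {K : Type*} [CommRing K] {ζ : K} {n : ℕ}

lemma sum_pow_eq_sum_card_filter_mod (hn : 0 < n) (hζ : ζ ^ n = 1) (X : Finset ℕ) :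
    ∑ x ∈ X, ζ ^ x = ∑ r ∈ range n, #(X.filter (· % n = r)) • ζ ^ r := by
  rw [← sum_fiberwise_of_maps_to (g := (· % n)) (t := range n)
    (fun x _ => mem_range.mpr (Nat.mod_lt x hn))]
  refine sum_congr rfl fun r _ => ?_
  rw [← sum_const]
  refine sum_congr rfl fun x hx => ?_
  rw [pow_eq_pow_mod x hζ, (mem_filter.mp hx).2]

lemma sum_pow_eq_of_residueEquiv (hn : 0 < n) (hζ : ζ ^ n = 1) {X Y : Finset ℕ}
    (h : ResidueEquiv X Y {n}) : ∑ x ∈ X, ζ ^ x = ∑ y ∈ Y, ζ ^ y := by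
  rw [sum_pow_eq_sum_card_filter_mod hn hζ, sum_pow_eq_sum_card_filter_mod hn hζ]
  exact sum_congr rfl fun r hr => by rw [h n rfl r (mem_range.mp hr)]

end RootOfUnity

lemma val_union_map_addRightEmbedding {X Y : Finset ℕ} {t : ℕ} (hX : ∀ x ∈ X, x < t) :
    (X ∪ Y.map (addRightEmbedding t)).val = X.val + Y.val.map (· + t) := by
  have hdisj : Disjoint X (Y.map (addRightEmbedding t)) := by
    rw [disjoint_left]
    intro x hx hxY
    obtain ⟨y, -, rfl⟩ := mem_map.mp hxY
    have := hX _ hx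
    simp only [addRightEmbedding_apply] at this
    omega
  rw [← disjUnion_eq_union _ _ hdisj, disjUnion_val, map_val]
  rfl

section Shift

variable {m t : ℕ} {A B : Multiset ℕ}

lemma map_mod_add_map_add_comm_of_dvd (hmt : m ∣ t) :
    (A + B.map (· + t)).map (· % m) = (B + A.map (· + t)).map (· % m) := by
  obtain ⟨c, rfl⟩ := hmt
  simp only [Multiset.map_add, Multiset.map_map, Function.comp_def, Nat.add_mul_mod_self_left]
  exact add_comm _ _

lemma map_mod_add_map_add_comm_of_map_mod_eq (h : A.map (· % m) = B.map (· % m)) :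
    (A + B.map (· + t)).map (· % m) = (B + A.map (· + t)).map (· % m) := by
  have hshift : ∀ C : Multiset ℕ,
      (C.map (· + t)).map (· % m) = (C.map (· % m)).map fun s => (s + t) % m := fun C => by
    simp only [Multiset.map_map, Function.comp_def, Nat.mod_add_mod]
  rw [Multiset.map_add, Multiset.map_add, hshift, hshift, h]

end Shift

lemma sum_pow_union_map_addRightEmbedding {K : Type*} [CommSemiring K] (ζ : K)
    {X Y : Finset ℕ} {t : ℕ} (hX : ∀ x ∈ X, x < t) :
    ∑ x ∈ X ∪ Y.map (addRightEmbedding t), ζ ^ x =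
      ∑ x ∈ X, ζ ^ x + (∑ y ∈ Y, ζ ^ y) * ζ ^ t := by
  rw [sum_eq_multiset_sum, val_union_map_addRightEmbedding hX]
  simp only [Multiset.map_add, Multiset.sum_add, Multiset.map_map, Function.comp_def, pow_add,
    ← sum_eq_multiset_sum, ← sum_mul]

lemma exists_map_mod_eq_and_sum_pow_ne {K : Type*} [CommRing K] [IsDomain K] {ζ : K}
    {n : ℕ} (hn : 0 < n) (hζ : ζ ^ n = 1) (M : Finset ℕ) (hM : ∀ m ∈ M, ζ ^ m ≠ 1) :
    ∃ X Y : Finset ℕ, (∀ m ∈ M, X.val.map (· % m) = Y.val.map (· % m)) ∧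
      ∑ x ∈ X, ζ ^ x ≠ ∑ y ∈ Y, ζ ^ y := by
  induction M using Finset.induction_on with
  | empty => exact ⟨{0}, ∅, by simp, by simp⟩
  | insert m M _ ih =>
    obtain ⟨X, Y, hres, hw⟩ := ih fun m' hm' => hM m' (mem_insert_of_mem hm')
    have hζm : ζ ^ m ≠ 1 := hM m (mem_insert_self m M)
    have hm : 0 < m := Nat.pos_of_ne_zero fun h => hζm (by rw [h, pow_zero])
    obtain ⟨B, hB⟩ := (X ∪ Y).exists_nat_subset_range
    obtain ⟨t, hmt, hζt, hBt⟩ : ∃ t, m ∣ t ∧ ζ ^ t = ζ ^ m ∧ B ≤ t := by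
      refine ⟨m + n * (m * B), ⟨1 + n * B, by ring⟩, ?_, ?_⟩
      · rw [pow_add, pow_mul, hζ, one_pow, mul_one]
      · have : 1 * (1 * B) ≤ n * (m * B) := Nat.mul_le_mul hn (Nat.mul_le_mul_right B hm)
        omega
    have hX : ∀ x ∈ X, x < t := fun x hx =>
      (mem_range.mp (hB (mem_union_left Y hx))).trans_le hBt
    have hY : ∀ y ∈ Y, y < t := fun y hy =>
      (mem_range.mp (hB (mem_union_right X hy))).trans_le hBt
    refine ⟨X ∪ Y.map (addRightEmbedding t), Y ∪ X.map (addRightEmbedding t), ?_, ?_⟩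
    · intro m' hm'
      rw [val_union_map_addRightEmbedding hX, val_union_map_addRightEmbedding hY]
      rcases mem_insert.mp hm' with rfl | hm'
      · exact map_mod_add_map_add_comm_of_dvd hmt
      · exact map_mod_add_map_add_comm_of_map_mod_eq (hres m' hm')
    · rw [sum_pow_union_map_addRightEmbedding ζ hX, sum_pow_union_map_addRightEmbedding ζ hY]
      intro h
      have hfactor : (∑ x ∈ X, ζ ^ x - ∑ y ∈ Y, ζ ^ y) * (1 - ζ ^ t) = 0 := by
        linear_combination h
      rcases mul_eq_zero.mp hfactor with h | h
      · exact hw (sub_eq_zero.mp h)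
      · exact hζm (hζt ▸ (sub_eq_zero.mp h).symm)

theorem statement2_general (M : Finset ℕ)
    (n : ℕ) (hn : 0 < n) (hnd : ∀ m ∈ M, ¬ n ∣ m) :
    ∃ X Y : Finset ℕ, ResidueEquiv X Y (M : Set ℕ) ∧ ¬ ResidueEquiv X Y {n} := by
  have hζ : IsPrimitiveRoot (Complex.exp (2 * Real.pi * Complex.I / n)) n :=
    Complex.isPrimitiveRoot_exp n hn.ne'
  obtain ⟨X, Y, hres, hw⟩ := exists_map_mod_eq_and_sum_pow_ne hn hζ.pow_eq_one M
    fun m hm h => hnd m hm ((hζ.pow_eq_one_iff_dvd m).mp h)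
  exact ⟨X, Y, residueEquiv_of_map_mod_eq fun m hm => hres m (mem_coe.mp hm),
    fun h => hw (sum_pow_eq_of_residueEquiv hn hζ.pow_eq_one h)⟩

theorem statement2 (M : Finset ℕ) (hne : M.Nonempty) (hpos : ∀ m ∈ M, 0 < m)
    (n : ℕ) (hn : 0 < n) (hnd : ∀ m ∈ M, ¬ n ∣ m) :
    ∃ X Y : Finset ℕ, ResidueEquiv X Y (M : Set ℕ) ∧ ¬ ResidueEquiv X Y {n} :=
  statement2_general M n hn hnd
end

section
/- Let s be a base, M a finite set of positive integers, and n a positive integer that does not divide any element of M. Then there exist blocks u and v of digits in base s which are block equivalent for M and not block equivalent for {n}, and whose common length is a multiple of each element of M and of n. -/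
/-- Number of occurrences of `z` in the finite sequence `w`. -/
def occCount {α : Type*} [DecidableEq α] {L : ℕ} (w : Fin L → α) (z : α) : ℕ :=
  (Finset.univ.filter (fun i => w i = z)).card

/-- `chunk w m` is `(w; m)`: the sequence of `L / m` consecutive blocks of length `m`
whose concatenation is the largest prefix of `w` whose length is a multiple of `m`. -/
def chunk {s L : ℕ} (w : Fin L → Fin s) (m : ℕ) : Fin (L / m) → (Fin m → Fin s) :=
  fun i j => w ⟨i.val * m + j.val, by
    have h1 : i.val + 1 ≤ L / m := i.isLt
    have h2 : (i.val + 1) * m ≤ L / m * m := Nat.mul_le_mul_right m h1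
    have h3 : L / m * m ≤ L := Nat.div_mul_le_self L m
    have h4 : i.val * m + m = (i.val + 1) * m := by ring
    have h5 : j.val < m := j.isLt
    omega⟩

/-!
Put `N = n * ∏ M` and give every subset `S ⊆ M` a segment of length `N`. In `u` the segment of
`S` carries a single `1` at offset `(∑ S) % N` when `#S` is even, in `v` when `#S` is odd; all other
digits are `0`. For `d ∣ N` no `d`-block straddles two segments, and the `d`-blocks of a segment
with its mark at offset `a` depend only on `a % d`.

For `m ∈ M`, toggling `m` in `S` flips the parity of `#S` and preserves `(∑ S) % m`, which matches
the `m`-blocks of `u` with those of `v`. For `n`, counting the `n`-blocks whose only `1` sits at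
position `o` shows that block equivalence would give, for every residue `o`, as many even as odd
subsets with `∑ S ≡ o [MOD n]`. Then `∑ S, (-1) ^ #S * ζ ^ (∑ S) = 0` for a primitive `n`-th root
of unity `ζ`, whereas this sum is `∏ m ∈ M, (1 - ζ ^ m) ≠ 0`.
-/

open Finset

section BlockCount

variable {α : Type*}

def block (w : ℕ → α) (d i : ℕ) : Fin d → α := fun r => w (i * d + r)

variable [DecidableEq α]

def blockCount (w : ℕ → α) (d k : ℕ) (z : Fin d → α) : ℕ :=
  #{i ∈ range k | block w d i = z}

theorem occCount_chunk {s L : ℕ} (w : ℕ → Fin s) (d : ℕ) (z : Fin d → Fin s) :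
    occCount (chunk (fun p : Fin L => w p) d) z = blockCount w d (L / d) z := by
  rw [occCount, blockCount, card_filter, card_filter]
  exact Fin.sum_univ_eq_sum_range (fun i => if block w d i = z then 1 else 0) _

theorem blockCount_add (w : ℕ → α) (d a b : ℕ) (z : Fin d → α) :
    blockCount w d (a + b) z =
      blockCount w d a z + blockCount (fun p => w (a * d + p)) d b z := by
  simp only [blockCount, card_filter, sum_range_add]
  congr 1
  refine sum_congr rfl fun i _ => ?_
  have : block w d (a + i) = block (fun p => w (a * d + p)) d i :=
    funext fun r => congrArg w (by ring)
  rw [this]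

theorem blockCount_congr {w w' : ℕ → α} {d k : ℕ} (h : ∀ p < k * d, w p = w' p)
    (z : Fin d → α) : blockCount w d k z = blockCount w' d k z := by
  refine congrArg card (filter_congr fun i hi => ?_)
  suffices block w d i = block w' d i by rw [this]
  funext r
  refine h _ ?_
  have := mem_range.1 hi
  nlinarith [r.isLt]

end BlockCount

section MarkedWords

variable {α : Type*} [Zero α] [One α]

def markSeg (μ : Option ℕ) (p : ℕ) : α := if μ = some p then 1 else 0

def markWord (N : ℕ) : List (Option ℕ) → ℕ → α
  | [], _ => 0
  | μ :: l, p => if p < N then markSeg μ p else markWord N l (p - N)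

theorem block_markSeg_none (d i : ℕ) : block (markSeg none : ℕ → α) d i = 0 := by
  funext r
  simp [block, markSeg]

theorem block_markSeg_some {d : ℕ} (hd : 0 < d) (a i : ℕ) :
    block (markSeg (some a) : ℕ → α) d i =
      if i = a / d then block (markSeg (some (a % d))) d 0 else 0 := by
  funext r
  have key : a = i * d + r ↔ i = a / d ∧ a % d = r := by
    have := Nat.div_mod_unique (a := a) (d := i) (c := r) hd
    simp only [r.isLt, and_true] at this
    rw [eq_comm (a := i), this]
    constructor <;> intro h <;> linarith [mul_comm d i]
  rw [ite_apply]
  simp only [block, markSeg, Option.some.injEq, key, zero_mul, zero_add, Pi.zero_apply]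
  rw [ite_and]

variable [DecidableEq α]

theorem blockCount_markSeg_some {d k a : ℕ} (hd : 0 < d) (ha : a < d * k) (z : Fin d → α) :
    blockCount (markSeg (some a)) d k z =
      (if block (markSeg (some (a % d))) d 0 = z then 1 else 0) +
        (k - 1) * if (0 : Fin d → α) = z then 1 else 0 := by
  have hq : a / d ∈ range k :=
    mem_range.2 ((Nat.div_lt_iff_lt_mul hd).2 (mul_comm d k ▸ ha))
  rw [blockCount, card_filter, ← add_sum_erase _ _ hq]
  simp only [block_markSeg_some hd a, if_true]
  rw [sum_congr rfl fun i hi => by rw [if_neg (ne_of_mem_erase hi)], sum_const,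
    card_erase_of_mem hq, card_range, smul_eq_mul]

theorem blockCount_markSeg_mod {d k a : ℕ} (hd : 0 < d) (ha : a < d * k) (z : Fin d → α) :
    blockCount (markSeg (some a)) d k z = blockCount (markSeg (some (a % d))) d k z := by
  have hk : 0 < k := Nat.pos_of_mul_pos_left (a.zero_le.trans_lt ha)
  have ha' : a % d < d * k := (Nat.mod_lt a hd).trans_le (Nat.le_mul_of_pos_right d hk)
  rw [blockCount_markSeg_some hd ha, blockCount_markSeg_some hd ha', Nat.mod_mod]

theorem blockCount_markSeg_unit [NeZero (1 : α)] {d k o : ℕ} (hk : 0 < k) (ho : o < d)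
    {μ : Option ℕ} (hμ : ∀ a ∈ μ, a < d) :
    blockCount (markSeg μ : ℕ → α) d k (block (markSeg (some o)) d 0) =
      if μ = some o then 1 else 0 := by
  have unit_ne : ∀ a, a ≠ o →
      (block (markSeg (some a) : ℕ → α) d 0) ≠ block (markSeg (some o)) d 0 := by
    intro a hao h
    have := congrFun h ⟨o, ho⟩
    simp [block, markSeg, hao] at this
  have zero_ne : (0 : Fin d → α) ≠ block (markSeg (some o)) d 0 := by
    intro h
    have := congrFun h ⟨o, ho⟩
    simp [block, markSeg] at this
  rcases μ with _ | a
  · simp [blockCount, block_markSeg_none, zero_ne]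
  · have ha := hμ a rfl
    rw [blockCount_markSeg_some (o.zero_le.trans_lt ho)
        (ha.trans_le (Nat.le_mul_of_pos_right d hk)),
      if_neg zero_ne, mul_zero, add_zero, Nat.mod_eq_of_lt ha]
    by_cases hao : a = o
    · simp [hao]
    · simp [hao, unit_ne a hao]

theorem blockCount_markWord {d k : ℕ} (hd : 0 < d) (l : List (Option ℕ))
    (hl : ∀ μ ∈ l, ∀ a ∈ μ, a < d * k) (z : Fin d → α) :
    blockCount (markWord (d * k) l) d (l.length * k) z =
      (l.map fun μ => blockCount (markSeg (μ.map (· % d))) d k z).sum := by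
  induction l with
  | nil => simp [blockCount]
  | cons μ l ih =>
    have head : blockCount (markWord (d * k) (μ :: l)) d k z =
        blockCount (markSeg (μ.map (· % d))) d k z := by
      rw [blockCount_congr (w' := markSeg μ) (fun p hp => by simp [markWord, mul_comm d k, hp])]
      rcases μ with _ | a
      · rfl
      · exact blockCount_markSeg_mod hd (hl _ List.mem_cons_self a rfl) z
    have tail : (fun p => markWord (d * k) (μ :: l) (k * d + p)) =
        (markWord (d * k) l : ℕ → α) := by
      funext p
      simp [markWord, mul_comm d k]
    rw [List.length_cons, Nat.succ_mul, add_comm, blockCount_add, head, tail,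
      ih fun μ' hμ' => hl μ' (List.mem_cons_of_mem _ hμ'), List.map_cons, List.sum_cons]

end MarkedWords

def subsetMark (N r : ℕ) (S : Finset ℕ) : Option ℕ :=
  if #S % 2 = r then some ((∑ x ∈ S, x) % N) else none

theorem subsetMark_map_mod_eq_some_iff {N n r o : ℕ} (hnN : n ∣ N) (S : Finset ℕ) :
    (subsetMark N r S).map (· % n) = some o ↔ #S % 2 = r ∧ (∑ x ∈ S, x) % n = o := by
  unfold subsetMark
  split_ifs with h <;> simp [h, Nat.mod_mod_of_dvd _ hnN]

theorem sum_subsetMark_even_eq_odd {β : Type*} [AddCommMonoid β] {M : Finset ℕ} {m N : ℕ}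
    (hm : m ∈ M) (hmN : m ∣ N) (G : Option ℕ → β) :
    ∑ S ∈ M.powerset, G ((subsetMark N 0 S).map (· % m)) =
      ∑ S ∈ M.powerset, G ((subsetMark N 1 S).map (· % m)) := by
  let toggle (S : Finset ℕ) : Finset ℕ := if m ∈ S then S.erase m else insert m S
  have toggle_toggle (S : Finset ℕ) : toggle (toggle S) = S := by
    by_cases h : m ∈ S <;> simp [toggle, h]
  have toggle_mem (S : Finset ℕ) (hS : S ∈ M.powerset) : toggle S ∈ M.powerset := by
    have hSM := mem_powerset.1 hS
    by_cases h : m ∈ S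
    · simpa [toggle, h] using (erase_subset m S).trans hSM
    · simpa [toggle, h] using insert_subset hm hSM
  have card_toggle (S : Finset ℕ) : #(toggle S) % 2 = 1 ↔ #S % 2 = 0 := by
    by_cases h : m ∈ S
    · have := card_erase_add_one h
      simp only [toggle, h, if_true]
      omega
    · simp only [toggle, h, if_false, card_insert_of_notMem h]
      omega
  have sum_toggle (S : Finset ℕ) : (∑ x ∈ toggle S, x) % m = (∑ x ∈ S, x) % m := by
    by_cases h : m ∈ S
    · simp only [toggle, h, if_true, ← add_sum_erase S _ h, Nat.add_mod_left]
    · simp only [toggle, h, if_false, sum_insert h, Nat.add_mod_left]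
  refine sum_nbij' toggle toggle toggle_mem toggle_mem (fun S _ => toggle_toggle S)
    (fun S _ => toggle_toggle S) (fun S _ => ?_)
  simp only [subsetMark, card_toggle, apply_ite (Option.map (· % m)), Option.map_some,
    Option.map_none, Nat.mod_mod_of_dvd _ hmN, sum_toggle]

theorem sum_pow_eq_sum_card_filter_mod_s3 {ι R : Type*} [CommSemiring R] {ζ : R} {n : ℕ}
    (hn : 0 < n) (hζ : ζ ^ n = 1) (T : Finset ι) (f : ι → ℕ) :
    ∑ i ∈ T, ζ ^ f i = ∑ o ∈ range n, #{i ∈ T | f i % n = o} • ζ ^ o := by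
  rw [← sum_fiberwise_of_maps_to (g := fun i => f i % n) (t := range n)
    (fun i _ => mem_range.2 (Nat.mod_lt _ hn))]
  refine sum_congr rfl fun o _ => ?_
  rw [← sum_const]
  refine sum_congr rfl fun i hi => ?_
  rw [pow_eq_pow_mod _ hζ, (mem_filter.1 hi).2]

theorem prod_one_sub_pow_eq_sum_powerset {R : Type*} [CommRing R] (ζ : R) (M : Finset ℕ) :
    ∏ m ∈ M, (1 - ζ ^ m) = ∑ S ∈ M.powerset, (-1) ^ #S * ζ ^ (∑ x ∈ S, x) := by
  simp only [prod_sub, prod_const_one, mul_one, ← prod_pow_eq_pow_sum]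

theorem exists_dvd_of_card_even_eq_card_odd {M : Finset ℕ} {n : ℕ} (hn : 0 < n)
    (h : ∀ o < n, #{S ∈ M.powerset | #S % 2 = 0 ∧ (∑ x ∈ S, x) % n = o} =
      #{S ∈ M.powerset | #S % 2 = 1 ∧ (∑ x ∈ S, x) % n = o}) :
    ∃ m ∈ M, n ∣ m := by
  set ζ : ℂ := Complex.exp (2 * Real.pi * Complex.I / n)
  have hζ : IsPrimitiveRoot ζ n := Complex.isPrimitiveRoot_exp n hn.ne'
  have hsum : ∀ r, ∑ S ∈ M.powerset with #S % 2 = r, ζ ^ (∑ x ∈ S, x) =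
      ∑ o ∈ range n, #{S ∈ M.powerset | #S % 2 = r ∧ (∑ x ∈ S, x) % n = o} • ζ ^ o := by
    intro r
    simp only [sum_pow_eq_sum_card_filter_mod_s3 hn hζ.pow_eq_one, filter_filter]
  have hsign : ∀ S : Finset ℕ, (-1) ^ #S * ζ ^ (∑ x ∈ S, x) =
      (if #S % 2 = 0 then ζ ^ (∑ x ∈ S, x) else 0) -
        if #S % 2 = 1 then ζ ^ (∑ x ∈ S, x) else 0 := by
    intro S
    rw [neg_one_pow_eq_pow_mod_two]
    rcases Nat.mod_two_eq_zero_or_one #S with h | h <;> simp [h]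
  have hzero : ∏ m ∈ M, (1 - ζ ^ m) = 0 := by
    rw [prod_one_sub_pow_eq_sum_powerset, sum_congr rfl fun S _ => hsign S, sum_sub_distrib,
      ← sum_filter, ← sum_filter, hsum, hsum, sub_eq_zero]
    exact sum_congr rfl fun o ho => by rw [h o (mem_range.1 ho)]
  by_contra! hndvd
  refine prod_ne_zero_iff.2 (fun m hm => ?_) hzero
  rw [sub_ne_zero, ne_comm, Ne, hζ.pow_eq_one_iff_dvd]
  exact hndvd m hm

noncomputable def subsetWord {α : Type*} [Zero α] [One α] (M : Finset ℕ) (N r : ℕ) : ℕ → α :=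
  markWord N (M.powerset.toList.map (subsetMark N r))

theorem occCount_chunk_subsetWord {s N d : ℕ} [NeZero s] (M : Finset ℕ) (r : ℕ) (hN : 0 < N)
    (hd : 0 < d) (hdN : d ∣ N) (z : Fin d → Fin s) :
    occCount (chunk (fun p : Fin (#M.powerset * N) => (subsetWord M N r p : Fin s)) d) z =
      ∑ S ∈ M.powerset, blockCount (markSeg ((subsetMark N r S).map (· % d))) d (N / d) z := by
  obtain ⟨k, rfl⟩ := hdN
  have hmarks : ∀ μ ∈ M.powerset.toList.map (subsetMark (d * k) r), ∀ a ∈ μ, a < d * k := by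
    intro μ hμ a ha
    obtain ⟨S, -, rfl⟩ := List.mem_map.1 hμ
    unfold subsetMark at ha
    split_ifs at ha
    · rw [← Option.some.inj ha]
      exact Nat.mod_lt _ hN
    · cases ha
  rw [occCount_chunk, Nat.mul_div_cancel_left k hd, ← mul_assoc, mul_comm _ d, mul_assoc,
    Nat.mul_div_cancel_left _ hd, subsetWord, ← Finset.length_toList,
    ← List.length_map (f := subsetMark (d * k) r), blockCount_markWord hd _ hmarks, List.map_map,
    sum_map_toList]
  rfl

theorem occCount_chunk_subsetWord_unit {t N n : ℕ} (M : Finset ℕ) (r : ℕ) (hN : 0 < N)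
    (hn : 0 < n) (hnN : n ∣ N) {o : ℕ} (ho : o < n) :
    occCount (chunk (fun p : Fin (#M.powerset * N) => (subsetWord M N r p : Fin (t + 2))) n)
        (block (markSeg (some o)) n 0) =
      #{S ∈ M.powerset | #S % 2 = r ∧ (∑ x ∈ S, x) % n = o} := by
  have hk : 0 < N / n := Nat.div_pos (Nat.le_of_dvd hN hnN) hn
  rw [occCount_chunk_subsetWord M r hN hn hnN, card_filter]
  refine sum_congr rfl fun S _ => ?_
  have hmarks : ∀ a ∈ (subsetMark N r S).map (· % n), a < n := by
    intro a ha
    obtain ⟨b, -, rfl⟩ := Option.mem_map.1 ha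
    exact Nat.mod_lt _ hn
  simp only [blockCount_markSeg_unit hk ho hmarks, subsetMark_map_mod_eq_some_iff hnN]

theorem statement3 (s : ℕ) (hs : 2 ≤ s) (M : Finset ℕ) (hM : ∀ m ∈ M, 0 < m)
    (n : ℕ) (hn : 0 < n) (hnd : ∀ m ∈ M, ¬ n ∣ m) :
    ∃ (ℓ : ℕ) (u v : Fin ℓ → Fin s), 0 < ℓ ∧ (∀ m ∈ M, m ∣ ℓ) ∧ n ∣ ℓ ∧
      (∀ m ∈ M, ∀ z : Fin m → Fin s, occCount (chunk u m) z = occCount (chunk v m) z) ∧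
      ¬ (∀ z : Fin n → Fin s, occCount (chunk u n) z = occCount (chunk v n) z) := by
  obtain ⟨t, rfl⟩ : ∃ t, s = t + 2 := ⟨s - 2, by omega⟩
  set N := n * ∏ m ∈ M, m
  have hN : 0 < N := Nat.mul_pos hn (prod_pos hM)
  have hmN : ∀ m ∈ M, m ∣ N := fun m hm => (dvd_prod_of_mem _ hm).mul_left n
  have hnN : n ∣ N := dvd_mul_right n _
  refine ⟨#M.powerset * N, fun p => subsetWord M N 0 p, fun p => subsetWord M N 1 p,
    Nat.mul_pos (card_pos.2 ⟨∅, empty_mem_powerset M⟩) hN, fun m hm => (hmN m hm).mul_left _,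
    hnN.mul_left _, fun m hm z => ?_, fun hequiv => ?_⟩
  · rw [occCount_chunk_subsetWord M 0 hN (hM m hm) (hmN m hm),
      occCount_chunk_subsetWord M 1 hN (hM m hm) (hmN m hm)]
    exact sum_subsetMark_even_eq_odd hm (hmN m hm) fun μ => blockCount (markSeg μ) m (N / m) z
  · obtain ⟨m, hm, hnm⟩ := exists_dvd_of_card_even_eq_card_odd hn fun o ho => by
      rw [← occCount_chunk_subsetWord_unit M 0 hN hn hnN ho,
        ← occCount_chunk_subsetWord_unit M 1 hN hn hnN ho]
      exact hequiv _
    exact hnd m hm hnm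
end

section
/- Let s be a base, M a finite set of positive integers, and n a positive integer that does not divide any element of M. Then for arbitrarily large positive integers ℓ_U there is a set U of blocks of length ℓ_U on B_s such that: U is balanced for M and B_s but not balanced for n and B_s; if s is odd then U = B_s^{ℓ_U} \ {z} for some block z which, read as an integer in base s, is even; and if s is even then U = B_s^{ℓ_U} \ {z, z̃} for blocks z, z̃ which, read as integers in base s, satisfy z even, z̃ odd and z < z̃. -/
/-- A finite set `U` of blocks of length `ℓ` over `B_s` is balanced for `m` and `B_s` if
`m ∣ ℓ` and in the concatenation of the blocks of `U` (in any order) every block of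
length `m` occurs with the same frequency; equivalently, the counts summed over the
blocks of `U` coincide for any two blocks `z z' : B_s^m`. -/
def BalancedSet (s ℓ m : ℕ) (U : Finset (Fin ℓ → Fin s)) : Prop :=
  m ∣ ℓ ∧ ∀ z z' : Fin m → Fin s,
    (∑ w ∈ U, occCount (chunk w m) z) = ∑ w ∈ U, occCount (chunk w m) z'

/-- The integer obtained by reading a block `b_0 b_1 ⋯ b_{ℓ-1}` over `B_s` in base `s`,
namely `b_0 s^{ℓ-1} + ⋯ + b_{ℓ-2} s + b_{ℓ-1}`. -/
def blockVal {s ℓ : ℕ} (b : Fin ℓ → Fin s) : ℕ :=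
  ∑ j : Fin ℓ, (b j : ℕ) * s ^ (ℓ - 1 - j.val)

open Finset

section Occurrences

variable {α : Type*} [DecidableEq α]

theorem occCount_comp_equiv {L L' : ℕ} (w : Fin L → α) (e : Fin L' ≃ Fin L) (z : α) :
    occCount (w ∘ e) z = occCount w z :=
  card_equiv e (by simp)

theorem sum_occCount [Fintype α] {L : ℕ} (w : Fin L → α) : ∑ z, occCount w z = L := by
  simp only [occCount]
  rw [← card_eq_sum_card_fiberwise fun _ _ => mem_univ _, card_univ, Fintype.card_fin]

theorem occCount_update {L : ℕ} (w : Fin L → α) (i : Fin L) (b z : α) :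
    (occCount (Function.update w i b) z : ℤ) =
      occCount w z - (if w i = z then 1 else 0) + (if b = z then 1 else 0) := by
  simp only [occCount, card_filter, Nat.cast_sum, Nat.cast_ite, Nat.cast_one, Nat.cast_zero]
  rw [← add_sum_erase _ _ (mem_univ i), ← add_sum_erase _ _ (mem_univ i)]
  rw [Function.update_self, sum_congr rfl fun j hj => by
    rw [Function.update_of_ne (ne_of_mem_erase hj)]]
  ring

end Occurrences

section Concatenation

variable {α : Type*} {T K : ℕ}

/-- The concatenation `F 0 F 1 ⋯ F (T - 1)`: position `r + K * a` carries `F a r`. -/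
def concatBlocks (F : Fin T → Fin K → α) : Fin (T * K) → α :=
  Function.uncurry F ∘ finProdFinEquiv.symm

theorem concatBlocks_apply_of_val_eq (F : Fin T → Fin K → α) {j : Fin (T * K)} {a : Fin T}
    {r : Fin K} (h : (j : ℕ) = r + K * a) : concatBlocks F j = F a r := by
  obtain rfl : j = finProdFinEquiv (a, r) := Fin.ext h
  simp [concatBlocks]

theorem concatBlocks_apply_zero [NeZero T] (F : Fin T → Fin K → α) (hK : 0 < K) :
    concatBlocks F ⟨0, Nat.mul_pos (Nat.pos_of_neZero T) hK⟩ = F 0 ⟨0, hK⟩ :=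
  concatBlocks_apply_of_val_eq F (by simp)

theorem concatBlocks_apply_last [NeZero T] (F : Fin T → Fin K → α) (hK : 0 < K) :
    concatBlocks F ⟨T * K - 1, Nat.sub_lt (Nat.mul_pos (Nat.pos_of_neZero T) hK) one_pos⟩ =
      F (Fin.rev 0) ⟨K - 1, Nat.sub_lt hK one_pos⟩ := by
  refine concatBlocks_apply_of_val_eq F ?_
  have : K ≤ T * K := Nat.le_mul_of_pos_left K (Nat.pos_of_neZero T)
  simp only [Fin.val_rev, Fin.val_zero, zero_add]
  rw [Nat.mul_comm K, Nat.sub_one_mul]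
  omega

theorem occCount_concatBlocks [DecidableEq α] (F : Fin T → Fin K → α) (z : α) :
    occCount (concatBlocks F) z = ∑ a, occCount (F a) z := by
  simp only [occCount, card_filter]
  rw [← finProdFinEquiv.sum_comp, Fintype.sum_prod_type]
  simp [concatBlocks]

theorem chunk_concatBlocks {s m : ℕ} [NeZero m] (hm : m ∣ K) (F : Fin T → Fin K → Fin s) :
    chunk (concatBlocks F) m =
      concatBlocks (fun a => chunk (F a) m) ∘ finCongr (Nat.mul_div_assoc T hm) := by
  funext i j
  simp only [concatBlocks, chunk, Function.comp_apply, finProdFinEquiv_symm_apply,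
    Function.uncurry_apply_pair]
  obtain ⟨k, rfl⟩ := hm
  have hdiv : (i * m + j : ℕ) / m = i := by
    rw [mul_comm, Nat.mul_add_div (Nat.pos_of_neZero m), Nat.div_eq_of_lt j.isLt, add_zero]
  have hmod : (i * m + j : ℕ) % m = j := by
    rw [mul_comm, Nat.mul_add_mod, Nat.mod_eq_of_lt j.isLt]
  congr 1 <;> ext <;> simp only [Fin.divNat, Fin.modNat, finCongr_apply, Fin.val_cast,
    Nat.mul_div_cancel_left k (Nat.pos_of_neZero m)]
  · rw [← Nat.div_div_eq_div_mul, hdiv]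
  · rw [Nat.mod_mul, hdiv, hmod, add_comm, mul_comm]

theorem occCount_chunk_concatBlocks {s m : ℕ} [NeZero m] (hm : m ∣ K)
    (F : Fin T → Fin K → Fin s) (v : Fin m → Fin s) :
    occCount (chunk (concatBlocks F) m) v = ∑ a, occCount (chunk (F a) m) v := by
  rw [chunk_concatBlocks hm, occCount_comp_equiv, occCount_concatBlocks]

theorem blockVal_concatBlocks {s : ℕ} (F : Fin T → Fin K → Fin s) :
    blockVal (concatBlocks F) = ∑ a, blockVal (F a) * s ^ (K * (T - 1 - a)) := by
  unfold blockVal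
  rw [← finProdFinEquiv.sum_comp, Fintype.sum_prod_type]
  refine sum_congr rfl fun a _ => ?_
  rw [sum_mul]
  refine sum_congr rfl fun r _ => ?_
  simp only [concatBlocks, Function.comp_apply, Equiv.symm_apply_apply, Function.uncurry_apply_pair,
    finProdFinEquiv_apply_val, mul_assoc, ← pow_add]
  congr 2
  obtain ⟨b, hb⟩ : ∃ b, T = a + 1 + b := ⟨T - 1 - a, by omega⟩
  have hr := r.isLt
  have hTK : T * K = K * a + K + K * b := by
    calc T * K = (a + 1 + b) * K := congrArg (· * K) hb
      _ = K * a + K + K * b := by ring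
  rw [hTK, show T - 1 - a = b by omega]
  omega

end Concatenation

section Digits

variable {s L : ℕ}

theorem blockVal_eq_finFunctionFinEquiv (w : Fin L → Fin s) :
    blockVal w = finFunctionFinEquiv (w ∘ Fin.rev) := by
  rw [finFunctionFinEquiv_apply, blockVal, ← Equiv.sum_comp Fin.revPerm]
  refine sum_congr rfl fun i _ => ?_
  simp only [Fin.revPerm_apply, Function.comp_apply, Fin.val_rev]
  congr 2
  omega

theorem blockVal_lt (w : Fin L → Fin s) : blockVal w < s ^ L := by
  rw [blockVal_eq_finFunctionFinEquiv]
  exact Fin.isLt _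

theorem val_apply_eq_blockVal_div_mod (w : Fin L → Fin s) (j : Fin L) :
    (w j : ℕ) = blockVal w / s ^ (L - 1 - j) % s := by
  have h := congrFun (finFunctionFinEquiv.symm_apply_apply (w ∘ Fin.rev)) (Fin.rev j)
  rw [Function.comp_apply, Fin.rev_rev] at h
  rw [← h, finFunctionFinEquiv_symm_apply_val, ← blockVal_eq_finFunctionFinEquiv, Fin.val_rev]
  congr 3
  omega

theorem blockVal_mod (w : Fin L → Fin s) (hL : 0 < L) :
    blockVal w % s = w ⟨L - 1, by omega⟩ := by
  rw [val_apply_eq_blockVal_div_mod w ⟨L - 1, by omega⟩]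
  simp

theorem blockVal_div (w : Fin L → Fin s) (hL : 0 < L) :
    blockVal w / s ^ (L - 1) = w ⟨0, hL⟩ := by
  have hlt : blockVal w / s ^ (L - 1) < s := by
    rw [Nat.div_lt_iff_lt_mul (pow_pos (w ⟨0, hL⟩).pos _), ← pow_succ', Nat.sub_add_cancel hL]
    exact blockVal_lt w
  rw [val_apply_eq_blockVal_div_mod w ⟨0, hL⟩, Nat.sub_zero, Nat.mod_eq_of_lt hlt]

theorem blockVal_lt_blockVal_of_head_lt {w w' : Fin L → Fin s} (hL : 0 < L)
    (h : w ⟨0, hL⟩ < w' ⟨0, hL⟩) : blockVal w < blockVal w' := by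
  by_contra! h'
  have := Nat.div_le_div_right (c := s ^ (L - 1)) h'
  rw [blockVal_div w hL, blockVal_div w' hL] at this
  exact absurd h (not_lt.mpr (Fin.le_iff_val_le_val.mpr this))

theorem even_blockVal_iff (hs : Even s) (w : Fin L → Fin s) (hL : 0 < L) :
    Even (blockVal w) ↔ Even (w ⟨L - 1, by omega⟩ : ℕ) := by
  rw [← blockVal_mod w hL, Nat.even_iff, Nat.even_iff,
    Nat.mod_mod_of_dvd _ (even_iff_two_dvd.mp hs)]

end Digits

section Balance

variable {s : ℕ} [NeZero s]

theorem sum_occCount_chunk_eq {L m : ℕ} [NeZero m] (v v' : Fin m → Fin s) :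
    ∑ w : Fin L → Fin s, occCount (chunk w m) v =
      ∑ w : Fin L → Fin s, occCount (chunk w m) v' := by
  -- adding `v' - v` to every chunk is a bijection of `B_s^L`
  let δ : Fin L → Fin s := fun i => (v' - v) (Fin.ofNat m i)
  have hδ : ∀ w : Fin L → Fin s, ∀ i, chunk (w + δ) m i = chunk w m i + (v' - v) := by
    intro w i
    funext j
    have hj : Fin.ofNat m (i * m + j) = j := by
      ext
      rw [Fin.val_ofNat, mul_comm, Nat.mul_add_mod, Nat.mod_eq_of_lt j.isLt]
    simp only [chunk, δ, Pi.add_apply, Pi.sub_apply, hj]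
  rw [← Equiv.sum_comp (Equiv.addRight δ) (fun w => occCount (chunk w m) v')]
  refine sum_congr rfl fun w _ => ?_
  simp only [occCount, Equiv.coe_addRight, hδ]
  congr 1
  ext i
  simp only [mem_filter, mem_univ, true_and]
  rw [← eq_sub_iff_add_eq, sub_sub_cancel]

theorem balancedSet_univ_sdiff_iff {ℓ m : ℕ} [NeZero m] (Z : Finset (Fin ℓ → Fin s)) :
    BalancedSet s ℓ m (univ \ Z) ↔ BalancedSet s ℓ m Z := by
  have hsplit := fun v : Fin m → Fin s =>
    sum_sdiff (f := fun w => occCount (chunk w m) v) (subset_univ Z)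
  refine and_congr_right fun _ => forall₂_congr fun v v' => ?_
  have := hsplit v
  have := hsplit v'
  have := sum_occCount_chunk_eq (L := ℓ) v v'
  omega

end Balance

section SingleDigit

variable {s Λ m : ℕ} [NeZero s] [NeZero m]

theorem chunk_piSingle (hm : m ∣ Λ) (x : Fin Λ) (a : Fin s) :
    chunk (Pi.single x a) m =
      Pi.single ⟨x / m, Nat.div_lt_div_of_lt_of_dvd hm x.isLt⟩
        (Pi.single (Fin.ofNat m x) a) := by
  funext i j
  have key : (i * m + j : ℕ) = x ↔ (i : ℕ) = x / m ∧ (j : ℕ) = x % m := by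
    constructor
    · rintro hx
      rw [← hx, mul_comm, Nat.mul_add_div (Nat.pos_of_neZero m), Nat.mul_add_mod,
        Nat.div_eq_of_lt j.isLt, Nat.mod_eq_of_lt j.isLt]
      simp
    · rintro ⟨hi, hj⟩
      rw [hi, hj, Nat.div_add_mod']
  simp only [chunk]
  by_cases hi : (i : ℕ) = x / m
  · obtain rfl : i = ⟨x / m, Nat.div_lt_div_of_lt_of_dvd hm x.isLt⟩ := Fin.ext hi
    rw [Pi.single_eq_same, Pi.single_apply, Pi.single_apply]
    refine if_congr ?_ rfl rfl
    rw [Fin.ext_iff, Fin.ext_iff, Fin.val_ofNat, key]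
    simp
  · rw [Pi.single_eq_of_ne fun h => hi (key.mp (congrArg Fin.val h)).1,
      Pi.single_eq_of_ne (fun h => hi (congrArg Fin.val h)), Pi.zero_apply]

theorem occCount_chunk_piSingle_sub (hm : m ∣ Λ) (x : Fin Λ) (a : Fin s) (v : Fin m → Fin s) :
    (occCount (chunk (Pi.single x a) m) v : ℤ) - occCount (chunk (0 : Fin Λ → Fin s) m) v =
      (if Pi.single (Fin.ofNat m x) a = v then 1 else 0) - (if 0 = v then 1 else 0) := by
  rw [chunk_piSingle hm, Pi.single, occCount_update]
  simp only [Pi.zero_apply]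
  have : chunk (0 : Fin Λ → Fin s) m = 0 := rfl
  rw [this]
  ring

end SingleDigit

section SignedSubsetSums

theorem sum_powerset_neg_one_pow_mul_eq_zero {R : Type*} [CommRing R] {M : Finset ℕ} {m : ℕ}
    (hm : m ∈ M) (g : ℕ → R) (hg : ∀ x, g (x + m) = g x) :
    ∑ t ∈ M.powerset, (-1) ^ #t * g (∑ x ∈ t, x) = 0 := by
  rw [← insert_erase hm, sum_powerset_insert (notMem_erase m M), ← sum_add_distrib]
  refine sum_eq_zero fun t ht => ?_
  have hmt : m ∉ t := fun h => notMem_erase m M (mem_powerset.mp ht h)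
  rw [card_insert_of_notMem hmt, sum_insert hmt, add_comm m, hg, pow_succ]
  ring

theorem exists_sum_powerset_neg_one_pow_ne_zero {M : Finset ℕ} {n : ℕ} [NeZero n]
    (hM : ∀ m ∈ M, ¬ n ∣ m) :
    ∃ r : Fin n,
      ∑ t ∈ M.powerset with Fin.ofNat n (∑ x ∈ t, x) = r, (-1 : ℤ) ^ #t ≠ 0 := by
  -- otherwise `∏ m ∈ M, (1 - ζ ^ m) = ∑ t ⊆ M, (-1) ^ #t * ζ ^ (∑ t)` would vanish
  by_contra! h
  have hζ : IsPrimitiveRoot (Complex.exp (2 * Real.pi * Complex.I / n)) n :=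
    Complex.isPrimitiveRoot_exp n (NeZero.ne n)
  set ζ := Complex.exp (2 * Real.pi * Complex.I / n)
  have hpow : ∀ N, ζ ^ N = ζ ^ (Fin.ofNat n N : ℕ) := fun N => by
    rw [Fin.val_ofNat, ← pow_mod_orderOf, ← hζ.eq_orderOf]
  apply prod_ne_zero_iff.mpr fun m hm => sub_ne_zero.mpr fun h1 =>
    hM m hm (hζ.dvd_of_pow_eq_one m h1.symm)
  rw [prod_sub]
  simp only [prod_const_one, mul_one]
  rw [← sum_fiberwise M.powerset (fun t => Fin.ofNat n (∑ x ∈ t, x))]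
  refine sum_eq_zero fun r _ => ?_
  calc ∑ t ∈ M.powerset with Fin.ofNat n (∑ x ∈ t, x) = r, (-1) ^ #t * ∏ x ∈ t, ζ ^ x
      = ((∑ t ∈ M.powerset with Fin.ofNat n (∑ x ∈ t, x) = r, (-1 : ℤ) ^ #t : ℤ) : ℂ)
          * ζ ^ (r : ℕ) := by
        push_cast
        rw [sum_mul]
        refine sum_congr rfl fun t ht => ?_
        rw [prod_pow_eq_pow_sum, hpow, (mem_filter.mp ht).2]
    _ = 0 := by rw [h r, Int.cast_zero, zero_mul]

end SignedSubsetSums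

section SubsetSumWords

variable {s : ℕ} [NeZero s] (Λ : ℕ) [NeZero Λ] (a : Fin s) (M : Finset ℕ)

def subsetSumBlock (P : ℕ → Prop) [DecidablePred P] (t : Finset ℕ) : Fin Λ → Fin s :=
  if P #t then Pi.single (Fin.ofNat Λ (∑ x ∈ t, x)) a else 0

noncomputable def subsetSumWord (P : ℕ → Prop) [DecidablePred P] :
    Fin (#M.powerset * Λ) → Fin s :=
  concatBlocks fun i => subsetSumBlock Λ a P (M.powerset.equivFin.symm i)

variable {Λ}

theorem occCount_chunk_subsetSumBlock_sub {m : ℕ} [NeZero m] (hm : m ∣ Λ) (t : Finset ℕ)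
    (v : Fin m → Fin s) :
    (occCount (chunk (subsetSumBlock Λ a Even t) m) v : ℤ) -
        occCount (chunk (subsetSumBlock Λ a Odd t) m) v =
      (-1) ^ #t * ((if Pi.single (Fin.ofNat m (∑ x ∈ t, x)) a = v then 1 else 0) -
        (if 0 = v then 1 else 0)) := by
  have hpos : Fin.ofNat m (Fin.ofNat Λ (∑ x ∈ t, x) : ℕ) = Fin.ofNat m (∑ x ∈ t, x) := by
    ext
    simp only [Fin.val_ofNat, Nat.mod_mod_of_dvd _ hm]
  have hsingle := occCount_chunk_piSingle_sub hm (Fin.ofNat Λ (∑ x ∈ t, x)) a v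
  rw [hpos] at hsingle
  rcases Nat.even_or_odd #t with ht | ht
  · simp only [subsetSumBlock, if_pos ht, if_neg (Nat.not_odd_iff_even.mpr ht), ht.neg_one_pow,
      one_mul]
    exact hsingle
  · simp only [subsetSumBlock, if_pos ht, if_neg (Nat.not_even_iff_odd.mpr ht), ht.neg_one_pow]
    rw [← hsingle]
    ring

theorem occCount_chunk_subsetSumWord_sub {m : ℕ} [NeZero m] (hm : m ∣ Λ)
    (v : Fin m → Fin s) :
    (occCount (chunk (subsetSumWord Λ a M Even) m) v : ℤ) -
        occCount (chunk (subsetSumWord Λ a M Odd) m) v =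
      ∑ t ∈ M.powerset, (-1) ^ #t *
        ((if Pi.single (Fin.ofNat m (∑ x ∈ t, x)) a = v then 1 else 0) -
          (if 0 = v then 1 else 0)) := by
  simp only [subsetSumWord, occCount_chunk_concatBlocks hm, Nat.cast_sum, ← sum_sub_distrib]
  rw [← sum_coe_sort M.powerset]
  exact Fintype.sum_equiv M.powerset.equivFin.symm _ _ fun i =>
    occCount_chunk_subsetSumBlock_sub a hm _ v

theorem occCount_chunk_subsetSumWord_eq {m : ℕ} [NeZero m] (hmM : m ∈ M) (hm : m ∣ Λ)
    (v : Fin m → Fin s) :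
    occCount (chunk (subsetSumWord Λ a M Even) m) v =
      occCount (chunk (subsetSumWord Λ a M Odd) m) v := by
  have h := occCount_chunk_subsetSumWord_sub a M hm v
  rw [sum_powerset_neg_one_pow_mul_eq_zero hmM (fun N => (if Pi.single (Fin.ofNat m N) a = v
    then 1 else 0) - (if 0 = v then (1 : ℤ) else 0)) fun N => ?_] at h
  · omega
  · have : Fin.ofNat m (N + m) = Fin.ofNat m N := by ext; simp
    rw [this]

theorem exists_occCount_chunk_subsetSumWord_ne {n : ℕ} [NeZero n] (hn : n ∣ Λ)
    (hM : ∀ m ∈ M, ¬ n ∣ m) (ha : a ≠ 0) :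
    ∃ v, occCount (chunk (subsetSumWord Λ a M Even) n) v ≠
      occCount (chunk (subsetSumWord Λ a M Odd) n) v := by
  obtain ⟨r, hr⟩ := exists_sum_powerset_neg_one_pow_ne_zero hM
  refine ⟨Pi.single r a, fun h => hr ?_⟩
  have hd := occCount_chunk_subsetSumWord_sub a M hn (Pi.single r a)
  rw [h, sub_self] at hd
  have hinj : ∀ r' : Fin n, (Pi.single r' a : Fin n → Fin s) = Pi.single r a ↔ r' = r :=
    fun r' => ⟨fun h' => by_contra fun hr' => ha <| by
      simpa [Pi.single_eq_of_ne hr'] using congrFun h' r', fun h' => by rw [h']⟩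
  refine (sum_filter _ _).trans (Eq.trans (sum_congr rfl fun t _ => ?_) hd.symm)
  simp [hinj, eq_comm (a := (0 : Fin n → Fin s)), ha]

theorem subsetSumWord_ne_const (hΛ : 2 ≤ Λ) (ha : a ≠ 0) (c : Fin s) :
    subsetSumWord Λ a M Even ≠ fun _ => c := by
  set i := M.powerset.equivFin ⟨∅, empty_mem_powerset M⟩
  have hblock : ∀ r, subsetSumWord Λ a M Even (finProdFinEquiv (i, r)) =
      (Pi.single 0 a : Fin Λ → Fin s) r := by
    intro r
    rw [subsetSumWord, concatBlocks_apply_of_val_eq (a := i) (r := r) _ (by simp)]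
    simp [subsetSumBlock, i]
  intro hc
  have h0 := hblock 0
  have h1 := hblock ⟨1, hΛ⟩
  rw [hc, Pi.single_eq_same] at h0
  rw [hc, Pi.single_eq_of_ne (by simp [Fin.ext_iff])] at h1
  exact ha (h0.symm.trans h1)

end SubsetSumWords

theorem sum_comp_update {α β : Type*} [Fintype α] [AddCommGroup β] {T : ℕ} (G : Fin T ≃ α)
    (j : Fin T) (w : α) (f : α → β) :
    ∑ i, f (Function.update G j w i) = ∑ u, f u - f (G j) + f w := by
  rw [← G.sum_comp f, ← add_sum_erase _ _ (mem_univ j), ← add_sum_erase _ _ (mem_univ j),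
    Function.update_self,
    sum_congr rfl fun i hi => by rw [Function.update_of_ne (ne_of_mem_erase hi)]]
  abel

section AllBlocks

variable {s K : ℕ} [NeZero s]

theorem balancedSet_concatBlocks_update_iff {T m : ℕ} [NeZero m] (hm : m ∣ K)
    (G : Fin T ≃ (Fin K → Fin s)) (j : Fin T) (w : Fin K → Fin s) :
    BalancedSet s (T * K) m {concatBlocks (Function.update G j w)} ↔
      ∀ v, occCount (chunk (G j) m) v = occCount (chunk w m) v := by
  have hcount : ∀ v, (occCount (chunk (concatBlocks (Function.update G j w)) m) v : ℤ) =
      ∑ u, (occCount (chunk u m) v : ℤ) - occCount (chunk (G j) m) v + occCount (chunk w m) v :=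
    fun v => by
      rw [occCount_chunk_concatBlocks hm, Nat.cast_sum]
      exact sum_comp_update G j w fun u => (occCount (chunk u m) v : ℤ)
  have htotal : ∀ v v', ∑ u : Fin K → Fin s, (occCount (chunk u m) v : ℤ) =
      ∑ u : Fin K → Fin s, (occCount (chunk u m) v' : ℤ) := fun v v' => by
    exact_mod_cast sum_occCount_chunk_eq v v'
  simp only [BalancedSet, sum_singleton, hm.mul_left T, true_and]
  constructor
  · intro h v
    have hconst : ∀ v', (occCount (chunk (G j) m) v' : ℤ) - occCount (chunk w m) v' =
        occCount (chunk (G j) m) v - occCount (chunk w m) v := fun v' => by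
      have := congrArg (fun k : ℕ => (k : ℤ)) (h v v')
      simp only [hcount] at this
      linarith [htotal v v']
    -- `G j` and `w` have equally many chunks, so a constant count difference vanishes
    have hsum : ∑ v' : Fin m → Fin s, ((occCount (chunk (G j) m) v' : ℤ) -
        occCount (chunk w m) v') = 0 := by
      rw [sum_sub_distrib, sub_eq_zero]
      exact_mod_cast (sum_occCount _).trans (sum_occCount _).symm
    rw [sum_congr rfl fun v' _ => hconst v', sum_const, card_univ, nsmul_eq_mul] at hsum
    have := (mul_eq_zero.mp hsum).resolve_left (by positivity)
    omega
  · intro h v v'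
    have := hcount v
    have := hcount v'
    rw [h] at *
    have := htotal v v'
    omega

def allBlocks (s K : ℕ) : Fin (s ^ K * K) → Fin s := concatBlocks finFunctionFinEquiv.symm

def allBlocksReplacing (w w' : Fin K → Fin s) : Fin (s ^ K * K) → Fin s :=
  let G := Fin.revPerm.trans finFunctionFinEquiv.symm
  concatBlocks (Function.update G (G.symm w) w')

theorem balancedSet_allBlocks {m : ℕ} [NeZero m] (hm : m ∣ K) :
    BalancedSet s (s ^ K * K) m {allBlocks s K} := by
  have h := (balancedSet_concatBlocks_update_iff hm finFunctionFinEquiv.symm (0 : Fin (s ^ K))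
    (finFunctionFinEquiv.symm 0)).mpr fun _ => rfl
  rwa [Function.update_eq_self] at h

theorem balancedSet_allBlocksReplacing_iff {m : ℕ} [NeZero m] (hm : m ∣ K)
    (w w' : Fin K → Fin s) :
    BalancedSet s (s ^ K * K) m {allBlocksReplacing w w'} ↔
      ∀ v, occCount (chunk w m) v = occCount (chunk w' m) v := by
  unfold allBlocksReplacing
  simpa only [Equiv.apply_symm_apply] using balancedSet_concatBlocks_update_iff hm
    (Fin.revPerm.trans finFunctionFinEquiv.symm)
    ((Fin.revPerm.trans finFunctionFinEquiv.symm).symm w) w'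

theorem finFunctionFinEquiv_symm_zero :
    finFunctionFinEquiv.symm (0 : Fin (s ^ K)) = 0 := by
  ext j
  simp

theorem finFunctionFinEquiv_symm_rev_zero :
    finFunctionFinEquiv.symm (Fin.rev 0 : Fin (s ^ K)) =
      fun _ => ⟨s - 1, Nat.sub_lt (NeZero.pos s) one_pos⟩ := by
  rw [Equiv.symm_apply_eq]
  ext
  have hgeom := geom_sum_mul_add (s - 1) K
  rw [Nat.sub_add_cancel (NeZero.one_le)] at hgeom
  rw [finFunctionFinEquiv_apply, Fin.sum_univ_eq_sum_range (fun i => (s - 1) * s ^ i), ← mul_sum]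
  rw [Fin.val_rev, Fin.val_zero, ← hgeom]
  ring_nf
  omega

theorem allBlocks_head (hK : 0 < K) :
    allBlocks s K ⟨0, Nat.mul_pos (Nat.pos_of_neZero _) hK⟩ = 0 := by
  rw [allBlocks, concatBlocks_apply_zero _ hK, finFunctionFinEquiv_symm_zero, Pi.zero_apply]

theorem allBlocks_last (hK : 0 < K) :
    (allBlocks s K ⟨s ^ K * K - 1, Nat.sub_lt (Nat.mul_pos (Nat.pos_of_neZero _) hK) one_pos⟩ :
      ℕ) = s - 1 := by
  rw [allBlocks, concatBlocks_apply_last _ hK, finFunctionFinEquiv_symm_rev_zero]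

theorem allBlocksReplacing_head (hK : 0 < K) {w : Fin K → Fin s} (hw : ∀ c, w ≠ fun _ => c)
    (w' : Fin K → Fin s) :
    (allBlocksReplacing w w' ⟨0, Nat.mul_pos (Nat.pos_of_neZero _) hK⟩ : ℕ) = s - 1 := by
  rw [allBlocksReplacing, concatBlocks_apply_zero _ hK, Function.update_of_ne]
  · simp [finFunctionFinEquiv_symm_rev_zero]
  · rw [Ne, Equiv.eq_symm_apply]
    simpa [finFunctionFinEquiv_symm_rev_zero] using (hw _).symm

theorem allBlocksReplacing_last (hK : 0 < K) {w : Fin K → Fin s} (hw : ∀ c, w ≠ fun _ => c)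
    (w' : Fin K → Fin s) :
    allBlocksReplacing w w'
      ⟨s ^ K * K - 1, Nat.sub_lt (Nat.mul_pos (Nat.pos_of_neZero _) hK) one_pos⟩ = 0 := by
  rw [allBlocksReplacing, concatBlocks_apply_last _ hK, Function.update_of_ne]
  · simp [finFunctionFinEquiv_symm_zero]
  · rw [Ne, Equiv.eq_symm_apply]
    rw [Equiv.trans_apply, Fin.revPerm_apply, Fin.rev_rev, finFunctionFinEquiv_symm_zero]
    exact fun h => hw 0 (by rw [← h]; rfl)

end AllBlocks

section Assembly

variable {s N : ℕ}

theorem occCount_chunk_concatBlocks_two {m : ℕ} [NeZero m] (hm : m ∣ N) (x y : Fin N → Fin s)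
    (v : Fin m → Fin s) :
    occCount (chunk (concatBlocks ![x, y]) m) v =
      occCount (chunk x m) v + occCount (chunk y m) v := by
  rw [occCount_chunk_concatBlocks hm, Fin.sum_univ_two]
  rfl

theorem balancedSet_concatBlocks_self_iff {m : ℕ} [NeZero m] (hm : m ∣ N)
    (y : Fin N → Fin s) :
    BalancedSet s (2 * N) m {concatBlocks ![y, y]} ↔ BalancedSet s N m {y} := by
  simp only [BalancedSet, sum_singleton, occCount_chunk_concatBlocks_two hm]
  exact and_congr (iff_of_true (hm.mul_left 2) hm) (forall₂_congr fun v v' => by omega)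

theorem balancedSet_concatBlocks_swap_iff {m : ℕ} [NeZero m] (hm : m ∣ N)
    {x y : Fin N → Fin s} (hx : BalancedSet s N m {x})
    (hne : concatBlocks ![x, y] ≠ concatBlocks ![y, x]) :
    BalancedSet s (2 * N) m {concatBlocks ![x, y], concatBlocks ![y, x]} ↔
      BalancedSet s N m {y} := by
  simp only [BalancedSet, sum_pair hne, occCount_chunk_concatBlocks_two hm, sum_singleton] at hx ⊢
  refine and_congr (iff_of_true (hm.mul_left 2) hm) (forall₂_congr fun v v' => ?_)
  have := hx.2 v v'
  omega

theorem even_blockVal_concatBlocks_self (hs : Odd s) (y : Fin N → Fin s) :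
    Even (blockVal (concatBlocks ![y, y])) := by
  rw [blockVal_concatBlocks, Fin.sum_univ_two]
  simp only [Matrix.cons_val_zero, Matrix.cons_val_one, Fin.val_zero, Fin.val_one]
  rw [show 2 - 1 - 0 = 1 by rfl, show 2 - 1 - 1 = 0 by rfl, mul_one, mul_zero, pow_zero, mul_one,
    ← mul_add_one]
  exact (hs.pow.add_one).mul_left _

theorem exists_sdiff_balancedSet_iff [NeZero s] {D : ℕ} (hD : D ∣ N) (hN : 0 < N)
    {x y : Fin N → Fin s} (hx : ∀ m [NeZero m], m ∣ D → BalancedSet s N m {x})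
    (hx₀ : x ⟨0, hN⟩ = 0) (hx₁ : (x ⟨N - 1, Nat.sub_lt hN one_pos⟩ : ℕ) = s - 1)
    (hy₀ : (y ⟨0, hN⟩ : ℕ) = s - 1) (hy₁ : y ⟨N - 1, Nat.sub_lt hN one_pos⟩ = 0) :
    ∃ U : Finset (Fin (2 * N) → Fin s),
      (∀ m [NeZero m], m ∣ D → (BalancedSet s (2 * N) m U ↔ BalancedSet s N m {y})) ∧
      (Odd s → ∃ z : Fin (2 * N) → Fin s, Even (blockVal z) ∧ U = univ \ {z}) ∧
      (Even s → ∃ z ztilde : Fin (2 * N) → Fin s, Even (blockVal z) ∧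
        Odd (blockVal ztilde) ∧ blockVal z < blockVal ztilde ∧ U = univ \ {z, ztilde}) := by
  have h2N : 0 < 2 * N := by omega
  rcases Nat.even_or_odd s with hs | hs
  · have hs2 : 2 ≤ s := by
      obtain ⟨k, hk⟩ := hs
      have := NeZero.ne s
      omega
    have hlt : blockVal (concatBlocks ![x, y]) < blockVal (concatBlocks ![y, x]) := by
      refine blockVal_lt_blockVal_of_head_lt h2N ?_
      rw [concatBlocks_apply_zero _ hN, concatBlocks_apply_zero _ hN, Fin.lt_def]
      simp only [Matrix.cons_val_zero, hx₀, hy₀, Fin.val_zero]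
      omega
    refine ⟨univ \ {concatBlocks ![x, y], concatBlocks ![y, x]}, fun m _ hm => ?_,
      fun hs' => absurd hs (Nat.not_even_iff_odd.mpr hs'),
      fun _ => ⟨_, _, ?_, ?_, hlt, rfl⟩⟩
    · exact (balancedSet_univ_sdiff_iff _).trans
        (balancedSet_concatBlocks_swap_iff (hm.trans hD) (hx m hm)
          fun h => hlt.ne (congrArg blockVal h))
    · rw [even_blockVal_iff hs _ h2N, concatBlocks_apply_last _ hN]
      simp [hy₁]
    · rw [← Nat.not_even_iff_odd, even_blockVal_iff hs _ h2N, concatBlocks_apply_last _ hN]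
      show ¬Even (x ⟨N - 1, _⟩ : ℕ)
      rw [hx₁, Nat.not_even_iff_odd]
      exact Nat.Even.sub_odd (by omega) hs odd_one
  · refine ⟨univ \ {concatBlocks ![y, y]}, fun m _ hm => ?_,
      fun _ => ⟨_, even_blockVal_concatBlocks_self hs y, rfl⟩,
      fun hs' => absurd hs' (Nat.not_even_iff_odd.mpr hs)⟩
    exact (balancedSet_univ_sdiff_iff _).trans (balancedSet_concatBlocks_self_iff (hm.trans hD) y)

end Assembly

theorem exists_blocks_occCount_chunk_eq_and_ne {s : ℕ} [NeZero s] {a : Fin s} (ha : a ≠ 0)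
    (M : Finset ℕ) (hM : ∀ m ∈ M, 0 < m) {n : ℕ} [NeZero n] (hnd : ∀ m ∈ M, ¬ n ∣ m)
    (L : ℕ) :
    ∃ K, L < K ∧ ∃ w w' : Fin K → Fin s, (∀ c, w ≠ fun _ => c) ∧
      (∀ m ∈ M, m ∣ K ∧
        ∀ v : Fin m → Fin s, occCount (chunk w m) v = occCount (chunk w' m) v) ∧
      n ∣ K ∧ ∃ v : Fin n → Fin s, occCount (chunk w n) v ≠ occCount (chunk w' n) v := by
  set Λ := n * (L + 2) * ∏ m ∈ M, m
  have hΛ : L + 2 ≤ Λ := by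
    calc L + 2 ≤ n * (L + 2) := Nat.le_mul_of_pos_left _ (Nat.pos_of_neZero n)
      _ ≤ Λ := Nat.le_mul_of_pos_right _ (prod_pos hM)
  have : NeZero Λ := ⟨by omega⟩
  have hK : Λ ≤ #M.powerset * Λ :=
    Nat.le_mul_of_pos_left Λ (card_pos.mpr ⟨∅, empty_mem_powerset M⟩)
  refine ⟨#M.powerset * Λ, by omega, subsetSumWord Λ a M Even, subsetSumWord Λ a M Odd,
    subsetSumWord_ne_const a M (by omega) ha, fun m hm => ?_, ?_, ?_⟩
  · have : NeZero m := ⟨(hM m hm).ne'⟩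
    have hmΛ : m ∣ Λ := (dvd_prod_of_mem _ hm).mul_left _
    exact ⟨hmΛ.mul_left _, occCount_chunk_subsetSumWord_eq a M hm hmΛ⟩
  · exact ((dvd_mul_right n (L + 2)).mul_right _).mul_left _
  · exact exists_occCount_chunk_subsetSumWord_ne a M ((dvd_mul_right n (L + 2)).mul_right _)
      hnd ha

theorem statement4 (s : ℕ) (hs : 2 ≤ s) (M : Finset ℕ) (hM : ∀ m ∈ M, 0 < m)
    (n : ℕ) (hn : 0 < n) (hnd : ∀ m ∈ M, ¬ n ∣ m) (L : ℕ) :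
    ∃ ℓU : ℕ, L ≤ ℓU ∧ ∃ U : Finset (Fin ℓU → Fin s),
      (∀ m ∈ M, BalancedSet s ℓU m U) ∧ ¬ BalancedSet s ℓU n U ∧
      (Odd s → ∃ z : Fin ℓU → Fin s, Even (blockVal z) ∧ U = Finset.univ \ {z}) ∧
      (Even s → ∃ z ztilde : Fin ℓU → Fin s, Even (blockVal z) ∧ Odd (blockVal ztilde) ∧
        blockVal z < blockVal ztilde ∧ U = Finset.univ \ {z, ztilde}) := by
  have : NeZero s := ⟨by omega⟩
  have : NeZero n := ⟨hn.ne'⟩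
  obtain ⟨K, hLK, w, w', hw, hMK, hnK, v, hv⟩ :=
    exists_blocks_occCount_chunk_eq_and_ne (a := ⟨1, hs⟩) (by simp [Fin.ext_iff]) M hM hnd L
  have hK : 0 < K := by omega
  obtain ⟨U, hU, hodd, heven⟩ := exists_sdiff_balancedSet_iff (dvd_mul_left K (s ^ K))
    (Nat.mul_pos (Nat.pos_of_neZero _) hK) (fun m _ => balancedSet_allBlocks)
    (allBlocks_head hK) (allBlocks_last hK) (allBlocksReplacing_head hK hw w')
    (allBlocksReplacing_last hK hw w')
  refine ⟨_, ?_, U, fun m hm => ?_, ?_, hodd, heven⟩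
  · have : K ≤ s ^ K * K := Nat.le_mul_of_pos_left K (Nat.pos_of_neZero _)
    omega
  · have : NeZero m := ⟨(hM m hm).ne'⟩
    exact (hU m (hMK m hm).1).mpr ((balancedSet_allBlocksReplacing_iff (hMK m hm).1 w w').mpr
      (hMK m hm).2)
  · rw [hU n hnK, balancedSet_allBlocksReplacing_iff hnK]
    exact fun h => hv (h v)
end

section
/- Let ε be a positive real number, s and r bases, and a < b positive integers. Let q be an s-adic rational with precision ⟨b;s⟩ and x a real number in [q, q + s^{−⟨b;s⟩}). Let u and v in B_r^{⟨b;r⟩−⟨a;r⟩+1} be the blocks of digits in the base-r expansions of q and x, respectively, between positions ⟨a;r⟩ and ⟨b;r⟩. Let p be a positive integer and let ũ ∈ B_{r^p}^{⟨b;r^p⟩−⟨a;r^p⟩+1} be the block of digits in the base-r^p expansion of q between positions ⟨a;r^p⟩ and ⟨b;r^p⟩. If D(u, B_r), D(ũ, B_{r^p}), 2/r^p and 3p/|u| are all less than ε, then D(v, B_r) < 5ε. -/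
/-- `⟨b;r⟩ = ⌈b / log r⌉` (natural logarithm). -/
noncomputable def nal (b r : ℕ) : ℕ := (⌈(b : ℝ) / Real.log r⌉).toNat

/-- `x` is an `s`-adic rational with precision `a`:
`x = Σ_{j=1}^{a} d_j s^{-j}` with digits `d_j ∈ {0,…,s-1}`. -/
def IsAdicRat (s a : ℕ) (x : ℝ) : Prop := ∃ D : ℕ, D < s ^ a ∧ x = (D : ℝ) / (s : ℝ) ^ a

/-- The `j`-th digit (for `j ≥ 1`) after the point of the base-`r` expansion of `x`,
namely `⌊x·r^j⌋ mod r` (this is the expansion not ending in all `(r-1)`s). -/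
noncomputable def rdigit (r : ℕ) (x : ℝ) (j : ℕ) : ℕ := (⌊x * (r : ℝ) ^ j⌋ % (r : ℤ)).toNat

/-- The simple discrepancy of an `ℕ`-valued block `w` of length `L` with respect to the
digit set `B_r = {0,…,r-1}`: `D(w,B_r) = max_{d < r} |occ(w,d)/L − 1/r|`. -/
noncomputable def discrepN (r : ℕ) {L : ℕ} (w : Fin L → ℕ) : ℝ :=
  ⨆ d : Fin r, |((Finset.univ.filter (fun i => w i = d.val)).card : ℝ) / (L : ℝ) - 1 / (r : ℝ)|


/-!
Write `M = ⟨b;r⟩`. Since `r^(M-1) < e^b ≤ s^⟨b;s⟩`, we have `0 ≤ (x - q) r^(M-1) < 1`, so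
`⌊x r^j⌋ - ⌊q r^j⌋ ∈ {0, 1}` for `j < M`. Hence the digits of `x` and `q` agree below the first `j₀`
where this difference is `1`, and from `j₀ + 1` to `M - 1` all digits of `q` equal `r - 1`. A run of
`ℓ` such digits inside `u` contains at least `ℓ/p - 2` digits `r^p - 1` of `ũ`, whose number is less
than `(r^(-p) + ε)|ũ|` because `D(ũ) < ε`; with `p|ũ| ≤ |u| + 2p` this shows that `u` and `v` differ
in fewer than `4ε|u|` places, and each of them moves the discrepancy by at most `1/|u|`. For
`ε > 1/5` there is nothing to prove since `D ≤ 1`.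
-/

open Finset

lemma nal_le_iff (b t n : ℕ) : nal b t ≤ n ↔ (b : ℝ) / Real.log t ≤ n := by
  rw [nal, Int.toNat_le, Int.ceil_le, Int.cast_natCast]

lemma lt_nal_iff (b t n : ℕ) : n < nal b t ↔ (n : ℝ) < b / Real.log t := by
  simpa only [not_le] using (nal_le_iff b t n).not

lemma log_natCast_pos {t : ℕ} (ht : 1 < t) : 0 < Real.log t :=
  Real.log_pos (by exact_mod_cast ht)

lemma nal_pos {t : ℕ} (ht : 1 < t) {b : ℕ} (hb : 0 < b) : 0 < nal b t :=
  (lt_nal_iff b t 0).2 (by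
    rw [Nat.cast_zero]; exact div_pos (by exact_mod_cast hb) (log_natCast_pos ht))

lemma nal_mono {t : ℕ} (ht : 1 < t) {a b : ℕ} (hab : a ≤ b) : nal a t ≤ nal b t := by
  rw [nal_le_iff]
  exact (div_le_div_of_nonneg_right (by exact_mod_cast hab) (log_natCast_pos ht).le).trans
    ((nal_le_iff b t _).1 le_rfl)

lemma nal_pow_le_iff {t : ℕ} (ht : 1 < t) {p : ℕ} (hp : 0 < p) (b k : ℕ) :
    nal b (t ^ p) ≤ k ↔ nal b t ≤ p * k := by
  have hlog := log_natCast_pos ht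
  rw [nal_le_iff, nal_le_iff, Nat.cast_pow, Real.log_pow, div_le_iff₀ (by positivity),
    div_le_iff₀ hlog]
  push_cast
  ring_nf

lemma pow_pred_nal_lt_pow_nal {t : ℕ} (ht : 1 < t) {s b : ℕ} (hs : 1 < s) (hb : 0 < b) :
    (t : ℝ) ^ (nal b t - 1) < (s : ℝ) ^ nal b s := by
  have hpred : ((nal b t - 1 : ℕ) : ℝ) < b / Real.log t :=
    (lt_nal_iff b t _).1 (Nat.sub_lt (nal_pos ht hb) one_pos)
  have hs' : (b : ℝ) / Real.log s ≤ nal b s := (nal_le_iff b s _).1 le_rfl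
  rw [lt_div_iff₀ (log_natCast_pos ht)] at hpred
  rw [div_le_iff₀ (log_natCast_pos hs)] at hs'
  have ht0 : (0 : ℝ) < t := by positivity
  have hs0 : (0 : ℝ) < s := by positivity
  rw [← Real.rpow_natCast, ← Real.rpow_natCast, Real.rpow_def_of_pos ht0,
    Real.rpow_def_of_pos hs0, Real.exp_lt_exp]
  linarith

section Digits

variable {r : ℕ}

lemma rdigit_lt (hr : 0 < r) (y : ℝ) (j : ℕ) : rdigit r y j < r := by
  have := Int.emod_lt_of_pos ⌊y * (r : ℝ) ^ j⌋ (by exact_mod_cast hr : (0 : ℤ) < r)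
  unfold rdigit
  omega

lemma floor_mul_pow_succ (hr : 0 < r) (y : ℝ) (j : ℕ) :
    ⌊y * (r : ℝ) ^ (j + 1)⌋ = r * ⌊y * (r : ℝ) ^ j⌋ + rdigit r y (j + 1) := by
  have hdiv : ⌊y * (r : ℝ) ^ j⌋ = ⌊y * (r : ℝ) ^ (j + 1)⌋ / r := by
    rw [← Int.floor_div_natCast, pow_succ, ← mul_assoc, mul_div_cancel_right₀ _ (by positivity)]
  have hmod := Int.emod_nonneg ⌊y * (r : ℝ) ^ (j + 1)⌋ (by exact_mod_cast hr.ne' : (r : ℤ) ≠ 0)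
  rw [hdiv, rdigit, Int.toNat_of_nonneg hmod, Int.mul_ediv_add_emod]

lemma floor_add_one_eq_of_rdigit_eq_pred (hr : 0 < r) (y : ℝ) (j n : ℕ)
    (hrun : ∀ i, j < i → i ≤ j + n → rdigit r y i = r - 1) :
    ⌊y * (r : ℝ) ^ (j + n)⌋ + 1 = r ^ n * (⌊y * (r : ℝ) ^ j⌋ + 1) := by
  induction n with
  | zero => simp
  | succ n ih =>
    have hd : (rdigit r y (j + n + 1) : ℤ) = r - 1 := by
      rw [hrun _ (by omega) (by omega)]; push_cast [Nat.one_le_iff_ne_zero.2 hr.ne']; ring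
    rw [← add_assoc, floor_mul_pow_succ hr, hd, pow_succ]
    linear_combination (r : ℤ) * ih fun i h₁ h₂ => hrun i h₁ (by omega)

lemma rdigit_pow_eq_pred_of_run (hr : 0 < r) {p : ℕ} (y : ℝ) (k : ℕ)
    (hrun : ∀ i, p * k < i → i ≤ p * (k + 1) → rdigit r y i = r - 1) :
    rdigit (r ^ p) y (k + 1) = r ^ p - 1 := by
  have hfloor := floor_add_one_eq_of_rdigit_eq_pred hr y (p * k) p (by simpa [mul_add] using hrun)
  have hR : (0 : ℤ) < r ^ p := by positivity
  have hmod : ((r : ℤ) ^ p * (⌊y * (r : ℝ) ^ (p * k)⌋ + 1) - 1) % (r : ℤ) ^ p = r ^ p - 1 := by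
    rw [show (r : ℤ) ^ p * (⌊y * (r : ℝ) ^ (p * k)⌋ + 1) - 1
        = (r ^ p - 1) + r ^ p * ⌊y * (r : ℝ) ^ (p * k)⌋ by ring,
      Int.add_mul_emod_self_left, Int.emod_eq_of_lt (by omega) (by omega)]
  rw [rdigit, Nat.cast_pow, ← pow_mul, show p * (k + 1) = p * k + p by ring,
    eq_sub_of_add_eq hfloor, Nat.cast_pow, hmod, ← Nat.cast_pow]
  omega

end Digits

section Carry

variable {r : ℕ}

lemma floor_le_floor_add_one_of_sub_lt_one {y z : ℝ} (h : z - y < 1) : ⌊z⌋ ≤ ⌊y⌋ + 1 := by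
  have := Int.lt_floor_add_one y
  have : ⌊z⌋ < ⌊y⌋ + 2 := Int.floor_lt.2 (by push_cast; linarith)
  omega

lemma floor_mul_lt_floor_mul_of_floor_lt {y z : ℝ} (h : ⌊y⌋ < ⌊z⌋) {c : ℕ} (hc : 0 < c) :
    ⌊y * c⌋ < ⌊z * c⌋ := by
  have hy : y < ⌊z⌋ := Int.floor_lt.1 h
  have hc' : (0 : ℝ) < c := by exact_mod_cast hc
  calc ⌊y * c⌋ < ⌊z⌋ * c := Int.floor_lt.2 (by push_cast; exact mul_lt_mul_of_pos_right hy hc')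
    _ ≤ ⌊z * c⌋ :=
      Int.le_floor.2 (by push_cast; exact mul_le_mul_of_nonneg_right (Int.floor_le z) hc'.le)

lemma floor_mul_pow_lt_of_le (hr : 0 < r) {y z : ℝ} {i j : ℕ}
    (h : ⌊y * (r : ℝ) ^ i⌋ < ⌊z * (r : ℝ) ^ i⌋) (hij : i ≤ j) :
    ⌊y * (r : ℝ) ^ j⌋ < ⌊z * (r : ℝ) ^ j⌋ := by
  obtain ⟨k, rfl⟩ := Nat.exists_eq_add_of_le hij
  simpa only [pow_add, ← mul_assoc, Nat.cast_pow] using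
    floor_mul_lt_floor_mul_of_floor_lt h (pow_pos hr k)

lemma rdigit_eq_pred_of_floor_lt (hr : 0 < r) {y z : ℝ} {j : ℕ}
    (hlt : ⌊y * (r : ℝ) ^ j⌋ < ⌊z * (r : ℝ) ^ j⌋)
    (hle : ⌊z * (r : ℝ) ^ (j + 1)⌋ ≤ ⌊y * (r : ℝ) ^ (j + 1)⌋ + 1) :
    rdigit r y (j + 1) = r - 1 := by
  rw [floor_mul_pow_succ hr, floor_mul_pow_succ hr] at hle
  have hmul := mul_le_mul_of_nonneg_left (Int.add_one_le_of_lt hlt) (Int.natCast_nonneg r)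
  rw [mul_add_one] at hmul
  have := rdigit_lt hr y (j + 1)
  omega

/-- Take for `j₀` the first `j ≤ n` with `⌊q r^j⌋ < ⌊x r^j⌋` (or `n + 1`). Once the floors differ
they keep differing, and as they differ by at most one up to `n`, each later digit of `q` is
`r - 1`. -/
lemma exists_carry_index (hr : 0 < r) {q x : ℝ} (hqx : q ≤ x) {n : ℕ}
    (hn : (x - q) * (r : ℝ) ^ n < 1) :
    ∃ j₀, (∀ j < j₀, rdigit r x j = rdigit r q j) ∧
      ∀ j, j₀ < j → j ≤ n → rdigit r q j = r - 1 := by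
  have hle : ∀ j, ⌊q * (r : ℝ) ^ j⌋ ≤ ⌊x * (r : ℝ) ^ j⌋ := fun j =>
    Int.floor_le_floor (mul_le_mul_of_nonneg_right hqx (by positivity))
  have hgap : ∀ j ≤ n, ⌊x * (r : ℝ) ^ j⌋ ≤ ⌊q * (r : ℝ) ^ j⌋ + 1 := fun j hj =>
    floor_le_floor_add_one_of_sub_lt_one <| by
      have : (x - q) * (r : ℝ) ^ j ≤ (x - q) * (r : ℝ) ^ n :=
        mul_le_mul_of_nonneg_left (pow_le_pow_right₀ (by exact_mod_cast hr) hj) (by linarith)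
      linarith
  have hagree : ∀ j, ¬ ⌊q * (r : ℝ) ^ j⌋ < ⌊x * (r : ℝ) ^ j⌋ → rdigit r x j = rdigit r q j :=
    fun j h => by rw [rdigit, rdigit, le_antisymm (not_lt.1 h) (hle j)]
  by_cases hcarry : ∃ j ≤ n, ⌊q * (r : ℝ) ^ j⌋ < ⌊x * (r : ℝ) ^ j⌋
  · refine ⟨Nat.find hcarry, fun j hj => hagree j fun h => ?_, fun j hj hjn => ?_⟩
    · exact Nat.find_min hcarry hj ⟨(hj.trans_le (Nat.find_spec hcarry).1).le, h⟩
    · obtain ⟨i, rfl⟩ : ∃ i, j = i + 1 := ⟨j - 1, by omega⟩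
      exact rdigit_eq_pred_of_floor_lt hr
        (floor_mul_pow_lt_of_le hr (Nat.find_spec hcarry).2 (by omega)) (hgap _ hjn)
  · simp only [not_exists, not_and, not_lt] at hcarry
    exact ⟨n + 1, fun j hj => hagree j (not_lt.2 (hcarry j (by omega))),
      fun j hj hjn => absurd hjn (by omega)⟩

end Carry

section Discrepancy

variable {r L : ℕ}

lemma abs_card_filter_div_sub_le_discrepN (w : Fin L → ℕ) (d : Fin r) :
    |(#{i | w i = d.val} : ℝ) / L - 1 / r| ≤ discrepN r w :=
  le_ciSup (f := fun d : Fin r => |(#{i | w i = d.val} : ℝ) / L - 1 / r|)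
    (Set.finite_range _).bddAbove d

lemma discrepN_nonneg (w : Fin L → ℕ) : 0 ≤ discrepN r w :=
  Real.iSup_nonneg fun _ => abs_nonneg _

lemma discrepN_le_one (w : Fin L → ℕ) : discrepN r w ≤ 1 := by
  refine Real.iSup_le (fun d => abs_sub_le_iff.2 ⟨?_, ?_⟩) zero_le_one
  · have : (#{i | w i = d.val} : ℝ) / L ≤ 1 :=
      div_le_one_of_le₀ (by exact_mod_cast (card_filter_le _ _).trans (card_fin L).le)
        (by positivity)
    have : (0 : ℝ) ≤ 1 / r := by positivity
    linarith
  · have : (1 : ℝ) / r ≤ 1 := by rw [one_div]; exact Nat.cast_inv_le_one r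
    have : (0 : ℝ) ≤ (#{i | w i = d.val} : ℝ) / L := by positivity
    linarith

lemma discrepN_le_add_card_ne_div (w w' : Fin L → ℕ) :
    discrepN r w ≤ discrepN r w' + (#{i | w i ≠ w' i} : ℝ) / L := by
  refine Real.iSup_le (fun d => ?_) (by have := discrepN_nonneg (r := r) w'; positivity)
  have hcard (v v' : Fin L → ℕ) (hvv' : ∀ i, v i ≠ v' i → w i ≠ w' i) :
      (#{i | v i = d.val} : ℝ) ≤ #{i | v' i = d.val} + #{i | w i ≠ w' i} := by
    norm_cast
    refine (card_le_card fun i hi => ?_).trans (card_union_le _ _)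
    simp only [mem_filter, mem_univ, true_and, mem_union] at hi ⊢
    by_cases h : v' i = d.val
    · exact Or.inl h
    · exact Or.inr (hvv' i fun he => h (by rw [← he, hi]))
  have h₁ := hcard w w' fun _ => id
  have h₂ := hcard w' w fun _ => Ne.symm
  have hdiff : |(#{i | w i = d.val} : ℝ) / L - #{i | w' i = d.val} / L|
      ≤ #{i | w i ≠ w' i} / L := by
    rw [← sub_div, abs_div, Nat.abs_cast]
    gcongr
    rw [abs_sub_le_iff]
    constructor <;> linarith
  calc |(#{i | w i = d.val} : ℝ) / L - 1 / r|
      ≤ |(#{i | w i = d.val} : ℝ) / L - #{i | w' i = d.val} / L|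
        + |(#{i | w' i = d.val} : ℝ) / L - 1 / r| := abs_sub_le _ _ _
    _ ≤ _ := by linarith [abs_card_filter_div_sub_le_discrepN w' d]

lemma card_filter_block {A M : ℕ} (hAM : A ≤ M) (P : ℕ → Prop) [DecidablePred P] :
    #{i : Fin (M - A + 1) | P (A + i)} = #{j ∈ Icc A M | P j} := by
  refine card_bij (fun i _ => A + i) (fun i hi => ?_) (fun i _ i' _ h => ?_) (fun j hj => ?_)
  · simp only [mem_filter, mem_univ, true_and, mem_Icc] at hi ⊢
    exact ⟨⟨le_add_right le_rfl, by omega⟩, hi⟩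
  · exact Fin.ext (by omega)
  · simp only [mem_filter, mem_Icc] at hj
    exact ⟨⟨j - A, by omega⟩, by simpa [Nat.add_sub_cancel' hj.1.1] using hj.2,
      Nat.add_sub_cancel' hj.1.1⟩

end Discrepancy

section Blocks

variable {r : ℕ}

lemma exists_card_rdigit_ne_le (hr : 0 < r) {q x : ℝ} (hqx : q ≤ x) (A : ℕ) {M : ℕ}
    (hgap : (x - q) * (r : ℝ) ^ (M - 1) < 1) :
    ∃ J, A ≤ J + 1 ∧ #{j ∈ Icc A M | rdigit r x j ≠ rdigit r q j} ≤ M + 1 - J ∧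
      ∀ j, J < j → j ≤ M - 1 → rdigit r q j = r - 1 := by
  obtain ⟨j₀, hagree, hrun⟩ := exists_carry_index hr hqx hgap
  refine ⟨max j₀ (A - 1), by omega, ?_, fun j hj => hrun j (by omega)⟩
  calc #{j ∈ Icc A M | rdigit r x j ≠ rdigit r q j} ≤ #(Icc (max j₀ (A - 1)) M) := by
        refine card_le_card fun j hj => ?_
        simp only [mem_filter, mem_Icc] at hj ⊢
        have : j₀ ≤ j := not_lt.1 fun h => hj.2 (hagree j h)
        omega
    _ = M + 1 - max j₀ (A - 1) := Nat.card_Icc _ _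

/-- Every base-`r^p` digit whose `p` base-`r` digits lie in the run `J + 1, …, ⟨b;r⟩ - 1` equals
`r^p - 1`, and only the at most `2p` positions in the two partially covered blocks are lost. -/
lemma sub_le_mul_card_rdigit_pow_eq_pred (hr : 1 < r) {p : ℕ} (hp : 0 < p) {a b J : ℕ} {q : ℝ}
    (hAJ : nal a r ≤ J + 1)
    (hrun : ∀ j, J < j → j ≤ nal b r - 1 → rdigit r q j = r - 1) :
    nal b r + 1 - J ≤
      p * #{k ∈ Icc (nal a (r ^ p)) (nal b (r ^ p)) | rdigit (r ^ p) q k = r ^ p - 1} + 2 * p := by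
  set M := nal b r
  set K := Ico ((J + p - 1) / p) ((M - 1) / p)
  have hK : ∀ k ∈ K, J ≤ p * k ∧ p * k + p ≤ M - 1 := by
    intro k hk
    rw [mem_Ico, Nat.div_le_iff_le_mul_add_pred hp, Nat.lt_iff_add_one_le,
      Nat.le_div_iff_mul_le hp, add_one_mul, mul_comm k] at hk
    omega
  have hKcard :
      #K ≤ #{k ∈ Icc (nal a (r ^ p)) (nal b (r ^ p)) | rdigit (r ^ p) q k = r ^ p - 1} := by
    refine card_le_card_of_injOn (· + 1) (fun k hk => ?_) (fun _ _ _ _ h => Nat.succ_injective h)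
    obtain ⟨hJk, hkM⟩ := hK k hk
    have hMk : ¬ nal b (r ^ p) ≤ k := by rw [nal_pow_le_iff hr hp]; omega
    simp only [mem_coe, mem_filter, mem_Icc]
    refine ⟨⟨(nal_pow_le_iff hr hp a _).2 (by rw [mul_add_one]; omega), by omega⟩,
      rdigit_pow_eq_pred_of_run (by omega) q k fun i hi hi' => hrun i (by omega) ?_⟩
    rw [mul_add_one] at hi'
    omega
  have hMdiv := Nat.div_add_mod (M - 1) p
  have hMmod := Nat.mod_lt (M - 1) hp
  have hJdiv := Nat.div_add_mod (J + p - 1) p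
  have hJmod := Nat.mod_lt (J + p - 1) hp
  have hpK : p * #K = p * ((M - 1) / p) - p * ((J + p - 1) / p) := by
    rw [Nat.card_Ico, Nat.mul_sub]
  have := Nat.mul_le_mul_left p hKcard
  omega

lemma mul_block_length_pow_le (hr : 1 < r) {p : ℕ} (hp : 0 < p) {a b : ℕ} (hab : a ≤ b) :
    p * (nal b (r ^ p) - nal a (r ^ p) + 1) ≤ nal b r - nal a r + 1 + 2 * p := by
  have hb : nal b (r ^ p) * p ≤ nal b r + p - 1 := by
    refine (Nat.le_div_iff_mul_le hp).1 ((nal_pow_le_iff hr hp b _).2 ?_)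
    have := Nat.div_add_mod (nal b r + p - 1) p
    have := Nat.mod_lt (nal b r + p - 1) hp
    omega
  have ha : nal a r ≤ p * nal a (r ^ p) := (nal_pow_le_iff hr hp a _).1 le_rfl
  have := nal_mono hr hab
  have := nal_mono (Nat.one_lt_pow hp.ne' hr) hab (t := r ^ p)
  rw [mul_add_one, Nat.mul_sub, mul_comm p]
  omega

end Blocks

lemma sub_mul_pow_pred_nal_lt_one {r s b : ℕ} (hr : 1 < r) (hs : 1 < s) (hb : 0 < b) {q x : ℝ}
    (hqx : q ≤ x) (hxq : x < q + (s : ℝ) ^ (-(nal b s : ℤ))) :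
    (x - q) * (r : ℝ) ^ (nal b r - 1) < 1 := by
  have hs0 : (0 : ℝ) < (s : ℝ) ^ nal b s := by positivity
  rw [zpow_neg, zpow_natCast, ← one_div, ← sub_lt_iff_lt_add', lt_div_iff₀ hs0] at hxq
  calc (x - q) * (r : ℝ) ^ (nal b r - 1) ≤ (x - q) * (s : ℝ) ^ nal b s :=
        mul_le_mul_of_nonneg_left (pow_pred_nal_lt_pow_nal hr hs hb).le (sub_nonneg.2 hqx)
    _ < 1 := hxq

lemma card_rdigit_ne_div_lt {ε : ℝ} {r a b p : ℕ} (hr : 1 < r) (hp : 0 < p) (hab : a ≤ b)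
    {q x : ℝ} (hqx : q ≤ x) (hgap : (x - q) * (r : ℝ) ^ (nal b r - 1) < 1) (hε : ε ≤ 1 / 5)
    (hut : discrepN (r ^ p) (fun i : Fin (nal b (r ^ p) - nal a (r ^ p) + 1) =>
      rdigit (r ^ p) q (nal a (r ^ p) + i.val)) < ε)
    (hrp : 2 / (r : ℝ) ^ p < ε)
    (hlen : 3 * (p : ℝ) / ((nal b r - nal a r + 1 : ℕ) : ℝ) < ε) :
    (#{j ∈ Icc (nal a r) (nal b r) | rdigit r x j ≠ rdigit r q j} : ℝ) /
      ((nal b r - nal a r + 1 : ℕ) : ℝ) < 4 * ε := by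
  have hR : 1 < r ^ p := Nat.one_lt_pow hp.ne' hr
  obtain ⟨J, hAJ, hdiff, hrun⟩ := exists_card_rdigit_ne_le (by omega) hqx (nal a r) hgap
  have hΔ : (#{j ∈ Icc (nal a r) (nal b r) | rdigit r x j ≠ rdigit r q j} : ℝ) ≤
      p * #{k ∈ Icc (nal a (r ^ p)) (nal b (r ^ p)) | rdigit (r ^ p) q k = r ^ p - 1} + 2 * p := by
    exact_mod_cast hdiff.trans (sub_le_mul_card_rdigit_pow_eq_pred hr hp hAJ hrun)
  have hlength : (p : ℝ) * ((nal b (r ^ p) - nal a (r ^ p) + 1 : ℕ) : ℝ) ≤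
      ((nal b r - nal a r + 1 : ℕ) : ℝ) + 2 * p := by
    exact_mod_cast mul_block_length_pow_le hr hp hab
  have hfreq := (le_abs_self _).trans (abs_card_filter_div_sub_le_discrepN (r := r ^ p)
    (fun i : Fin (nal b (r ^ p) - nal a (r ^ p) + 1) => rdigit (r ^ p) q (nal a (r ^ p) + i.val))
    ⟨r ^ p - 1, by omega⟩) |>.trans_lt hut
  rw [card_filter_block (nal_mono (Nat.one_lt_pow hp.ne' hr) hab)
    (fun k => rdigit (r ^ p) q k = r ^ p - 1), sub_lt_iff_lt_add', div_lt_iff₀ (by positivity),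
    Nat.cast_pow] at hfreq
  rw [div_lt_iff₀ (by positivity)] at hlen ⊢
  have hRpos : (0 : ℝ) < (r : ℝ) ^ p := by positivity
  have hinv : 1 / (r : ℝ) ^ p < ε / 2 := by rw [div_lt_iff₀ hRpos] at hrp ⊢; linarith
  have hp' : (0 : ℝ) < p := by exact_mod_cast hp
  have hε0 : 0 < ε := (by positivity : (0 : ℝ) < 2 / (r : ℝ) ^ p).trans hrp
  have hpε : (p : ℝ) * ε ≤ p / 5 := by nlinarith
  nlinarith [mul_lt_mul_of_pos_left hfreq hp',
    mul_le_mul_of_nonneg_left hlength (by positivity : (0 : ℝ) ≤ 1 / (r : ℝ) ^ p + ε),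
    mul_le_mul_of_nonneg_right hinv.le
      (by positivity : (0 : ℝ) ≤ ((nal b r - nal a r + 1 : ℕ) : ℝ) + 2 * p)]

theorem statement13_general (ε : ℝ) (s r : ℕ) (hs : 2 ≤ s) (hr : 2 ≤ r)
    (a b : ℕ) (hab : a < b)
    (q : ℝ)
    (x : ℝ) (hqx : q ≤ x) (hxq : x < q + (s : ℝ) ^ (-(nal b s : ℤ)))
    (p : ℕ) (hp : 0 < p)
    (hu : discrepN r (fun i : Fin (nal b r - nal a r + 1) =>
      rdigit r q (nal a r + i.val)) < ε)
    (hut : discrepN (r ^ p) (fun i : Fin (nal b (r ^ p) - nal a (r ^ p) + 1) =>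
      rdigit (r ^ p) q (nal a (r ^ p) + i.val)) < ε)
    (hrp : 2 / (r : ℝ) ^ p < ε)
    (hlen : 3 * (p : ℝ) / ((nal b r - nal a r + 1 : ℕ) : ℝ) < ε) :
    discrepN r (fun i : Fin (nal b r - nal a r + 1) =>
      rdigit r x (nal a r + i.val)) < 5 * ε := by
  rcases le_or_gt ε (1 / 5) with hε | hε
  · have hgap := sub_mul_pow_pred_nal_lt_one hr hs (by omega) hqx hxq
    calc _ ≤ _ := discrepN_le_add_card_ne_div _
          (fun i : Fin (nal b r - nal a r + 1) => rdigit r q (nal a r + i.val))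
      _ < ε + 4 * ε := by
        rw [card_filter_block (nal_mono hr hab.le) (fun j => rdigit r x j ≠ rdigit r q j)]
        exact add_lt_add hu (card_rdigit_ne_div_lt hr hp hab.le hqx hgap hε hut hrp hlen)
      _ = 5 * ε := by ring
  · linarith [discrepN_le_one (r := r)
      fun i : Fin (nal b r - nal a r + 1) => rdigit r x (nal a r + i.val)]

theorem statement13 (ε : ℝ) (hε : 0 < ε) (s r : ℕ) (hs : 2 ≤ s) (hr : 2 ≤ r)
    (a b : ℕ) (ha : 0 < a) (hab : a < b)
    (q : ℝ) (hq : IsAdicRat s (nal b s) q)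
    (x : ℝ) (hqx : q ≤ x) (hxq : x < q + (s : ℝ) ^ (-(nal b s : ℤ)))
    (p : ℕ) (hp : 0 < p)
    (hu : discrepN r (fun i : Fin (nal b r - nal a r + 1) =>
      rdigit r q (nal a r + i.val)) < ε)
    (hut : discrepN (r ^ p) (fun i : Fin (nal b (r ^ p) - nal a (r ^ p) + 1) =>
      rdigit (r ^ p) q (nal a (r ^ p) + i.val)) < ε)
    (hrp : 2 / (r : ℝ) ^ p < ε)
    (hlen : 3 * (p : ℝ) / ((nal b r - nal a r + 1 : ℕ) : ℝ) < ε) :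
    discrepN r (fun i : Fin (nal b r - nal a r + 1) =>
      rdigit r x (nal a r + i.val)) < 5 * ε :=
  statement13_general ε s r hs hr a b hab q x hqx hxq p hp hu hut hrp hlen
end

section
/- Let s and t be bases and let I be an s-adic interval of length s^{−⟨b;s⟩} for a positive integer b. For a = b + ⌈log s + 3 log t⌉, there is a t-adic subinterval of I of length t^{−⟨a;t⟩}. -/
/-!
With `M = ⟨b;s⟩` and `N = ⟨a;t⟩` one has `s^M ≤ s·e^b` and `e^a ≤ t^N`, and the choice of `a`
gives `e^a ≥ t³·s·e^b`, so `t^N ≥ 2·s^M`. A grid of mesh `1/t^N` at most half the length of `I`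
always has a cell inside `I`: take the first grid point at or after the left end of `I`.
-/

open Real Set

theorem exists_Ico_subset_Ico_of_two_mul_le {S T : ℝ} (hS : 0 < S) (hST : 2 * S ≤ T)
    {x : ℝ} (hx : 0 ≤ x) :
    ∃ c : ℕ, Ico (c / T) ((c + 1) / T) ⊆ Ico (x / S) ((x + 1) / S) := by
  have hT : 0 < T := by linarith
  have hy : 0 ≤ x * T / S := by positivity
  have hTS : 2 ≤ T / S := by rwa [le_div_iff₀ hS]
  refine ⟨⌈x * T / S⌉₊, Ico_subset_Ico ?_ ?_⟩
  · calc x / S = x * T / S / T := by field_simp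
      _ ≤ ⌈x * T / S⌉₊ / T := div_le_div_of_nonneg_right (Nat.le_ceil _) hT.le
  · calc ((⌈x * T / S⌉₊ : ℝ) + 1) / T ≤ (x * T / S + T / S) / T :=
          div_le_div_of_nonneg_right (by linarith [Nat.ceil_lt_add_one hy]) hT.le
      _ = (x + 1) / S := by field_simp

section nal

variable {r : ℕ} (b : ℕ) (hr : 1 < r)
include hr

theorem exp_le_pow_nal : exp b ≤ (r : ℝ) ^ nal b r := by
  have hlog : 0 < log r := log_pos (by exact_mod_cast hr)
  have hceil : (b : ℝ) / log r ≤ nal b r := by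
    rw [nal, Int.ceil_toNat]
    exact Nat.le_ceil _
  rw [← exp_log (by positivity : (0 : ℝ) < r), ← exp_nat_mul, exp_le_exp]
  rwa [div_le_iff₀ hlog] at hceil

theorem pow_nal_le : (r : ℝ) ^ nal b r ≤ r * exp b := by
  have hlog : 0 < log r := log_pos (by exact_mod_cast hr)
  have hceil : (nal b r : ℝ) ≤ b / log r + 1 := by
    rw [nal, Int.ceil_toNat]
    exact (Nat.ceil_lt_add_one (by positivity)).le
  have hr0 : (0 : ℝ) < r := by positivity
  calc (r : ℝ) ^ nal b r = exp (nal b r * log r) := by rw [exp_nat_mul, exp_log hr0]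
    _ ≤ exp (log r + b) := by
        rw [exp_le_exp, ← le_div_iff₀ hlog, add_div, div_self hlog.ne', add_comm]
        exact hceil
    _ = r * exp b := by rw [exp_add, exp_log hr0]

end nal

theorem two_mul_pow_nal_le_pow_nal {s t : ℕ} (hs : 1 < s) (ht : 2 ≤ t) (b : ℕ) :
    2 * (s : ℝ) ^ nal b s ≤ (t : ℝ) ^ nal (b + (⌈log s + 3 * log t⌉).toNat) t := by
  set a := b + (⌈log s + 3 * log t⌉).toNat
  have hs0 : (0 : ℝ) < s := by exact_mod_cast hs.trans' zero_lt_one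
  have ht2 : (2 : ℝ) ≤ t := by exact_mod_cast ht
  have ha : (b : ℝ) + log s + 3 * log t ≤ a := by
    rw [add_assoc]
    simp only [a, Nat.cast_add, Int.ceil_toNat]
    gcongr
    exact Nat.le_ceil _
  calc 2 * (s : ℝ) ^ nal b s ≤ 2 * (s * exp b) := by gcongr; exact pow_nal_le b hs
    _ ≤ (t : ℝ) ^ 3 * (s * exp b) := by
          gcongr
          exact ht2.trans (le_self_pow₀ (by linarith) (by norm_num))
    _ = exp (b + log s + 3 * log t) := by
          rw [exp_add, exp_add, exp_log hs0, ← log_rpow (by positivity),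
            exp_log (by positivity), rpow_ofNat]
          ring
    _ ≤ exp a := exp_le_exp.mpr ha
    _ ≤ (t : ℝ) ^ nal a t := exp_le_pow_nal a (by omega)

theorem statement15_general (s t : ℕ) (hs : 2 ≤ s) (ht : 2 ≤ t) (b : ℕ)
    (a : ℕ) (ha : a = b + (⌈Real.log s + 3 * Real.log t⌉).toNat) (a₀ : ℕ) :
    ∃ c : ℕ,
      Set.Ico ((c : ℝ) / (t : ℝ) ^ (nal a t)) (((c : ℝ) + 1) / (t : ℝ) ^ (nal a t)) ⊆
        Set.Ico ((a₀ : ℝ) / (s : ℝ) ^ (nal b s)) (((a₀ : ℝ) + 1) / (s : ℝ) ^ (nal b s)) := by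
  subst ha
  exact exists_Ico_subset_Ico_of_two_mul_le (by positivity)
    (two_mul_pow_nal_le_pow_nal (by omega) ht b) a₀.cast_nonneg

/-- Let `I = [a₀/s^⟨b;s⟩, (a₀+1)/s^⟨b;s⟩)` be an `s`-adic interval of length
`s^{-⟨b;s⟩}`.  For `a = b + ⌈log s + 3 log t⌉` there is a `t`-adic subinterval of `I`
of length `t^{-⟨a;t⟩}`. -/
theorem statement15 (s t : ℕ) (hs : 2 ≤ s) (ht : 2 ≤ t) (b : ℕ) (hb : 0 < b)
    (a : ℕ) (ha : a = b + (⌈Real.log s + 3 * Real.log t⌉).toNat) (a₀ : ℕ) :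
    ∃ c : ℕ,
      Set.Ico ((c : ℝ) / (t : ℝ) ^ (nal a t)) (((c : ℝ) + 1) / (t : ℝ) ^ (nal a t)) ⊆
        Set.Ico ((a₀ : ℝ) / (s : ℝ) ^ (nal b s)) (((a₀ : ℝ) + 1) / (s : ℝ) ^ (nal b s)) :=
  statement15_general s t hs ht b a ha a₀
end

section
/- Let ε be a positive real, r a base, (w_j)_{j≥0} an infinite sequence of elements of {0,1,...,r−1}, and (b_t)_{t≥0} an increasing sequence of positive integers. Suppose there is an integer t_0 such that for all t > t_0: b_{t+1} − b_t ≤ ε·b_t and D((w_{b_t+1},...,w_{b_{t+1}}), B_r) < ε. Then limsup_{k→∞} D((w_0,...,w_k), B_r) ≤ 2ε. -/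
/-!
Write `Δ(a, n, d) = occ(w_a … w_{a+n-1}, d) - n/r` (`digitDeviation w a n d`), so that the discrepancy of a block of length
`n` is `max_d |Δ| / n`, and `Δ` is additive under concatenation of blocks. Past `t₀` each block
`(b_t, b_{t+1}]` contributes at most `ε` times its length, so telescoping gives
`|Δ(0, b_t + 1, d)| ≤ C + ε b_t`. A prefix of length `k + 1` ends inside some block, and the
unfinished part of that block has length at most `b_{t+1} - b_t ≤ ε b_t ≤ ε (k + 1)`. Hence
`|Δ(0, k + 1, d)| ≤ C + 2ε (k + 1)`, and the prefix discrepancy is at most `2ε + C / (k + 1)`.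
-/

/-- The simple discrepancy of a block `w` of length `L` over the digit set `B_r`:
`D(w,B_r) = max_{d < r} |occ(w,d)/L − 1/r|`. -/
noncomputable def discrepancy {r : ℕ} {L : ℕ} (w : Fin L → Fin r) : ℝ :=
  ⨆ d : Fin r, |((Finset.univ.filter (fun i => w i = d)).card : ℝ) / (L : ℝ) - 1 / (r : ℝ)|

open Finset Filter Topology

variable {r : ℕ}

noncomputable def digitDeviation (w : ℕ → Fin r) (a n : ℕ) (d : Fin r) : ℝ :=
  ∑ i ∈ range n, ((if w (a + i) = d then 1 else 0) - 1 / r)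

theorem discrepancy_nonneg {L : ℕ} (v : Fin L → Fin r) : 0 ≤ discrepancy v :=
  Real.iSup_nonneg fun _ => abs_nonneg _

section Deviation

variable (w : ℕ → Fin r)

theorem digitDeviation_add (d : Fin r) (a m s : ℕ) :
    digitDeviation w a (m + s) d = digitDeviation w a m d + digitDeviation w (a + m) s d := by
  simp only [digitDeviation, sum_range_add, add_assoc]

theorem digitDeviation_sub (d : Fin r) (a : ℕ) {m n : ℕ} (h : m ≤ n) :
    digitDeviation w a n d - digitDeviation w a m d = digitDeviation w (a + m) (n - m) d := by
  rw [sub_eq_iff_eq_add', ← digitDeviation_add, Nat.add_sub_cancel' h]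

theorem abs_digitDeviation_le (d : Fin r) (a n : ℕ) : |digitDeviation w a n d| ≤ n := by
  have hr : 0 ≤ 1 / (r : ℝ) ∧ 1 / (r : ℝ) ≤ 1 :=
    ⟨by positivity, div_le_one_of_le₀ (by exact_mod_cast d.pos) (Nat.cast_nonneg r)⟩
  calc |digitDeviation w a n d|
      ≤ ∑ i ∈ range n, |(if w (a + i) = d then 1 else 0) - 1 / (r : ℝ)| :=
        abs_sum_le_sum_abs _ _
    _ ≤ ∑ _i ∈ range n, 1 := sum_le_sum fun i _ => by
        rw [abs_le]; split_ifs <;> constructor <;> linarith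
    _ = n := by simp

theorem card_filter_div_sub_eq_digitDeviation_div (d : Fin r) (a : ℕ) {n : ℕ} (hn : n ≠ 0) :
    (#(univ.filter fun i : Fin n => w (a + i) = d) : ℝ) / n - 1 / r =
      digitDeviation w a n d / n := by
  have hcount : (#(univ.filter fun i : Fin n => w (a + i) = d) : ℝ) =
      ∑ i ∈ range n, if w (a + i) = d then 1 else 0 := by
    rw [← Fin.sum_univ_eq_sum_range (fun i => if w (a + i) = d then (1 : ℝ) else 0), sum_boole]
  rw [hcount, digitDeviation, sum_sub_distrib, sum_const, card_range, nsmul_eq_mul]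
  field_simp

theorem discrepancy_eq_iSup_abs_digitDeviation_div (a : ℕ) {n : ℕ} (hn : n ≠ 0) :
    discrepancy (fun i : Fin n => w (a + i)) = ⨆ d, |digitDeviation w a n d| / n := by
  simp only [discrepancy, card_filter_div_sub_eq_digitDeviation_div w _ a hn, abs_div,
    Nat.abs_cast]

theorem abs_digitDeviation_le_mul_discrepancy (d : Fin r) (a n : ℕ) :
    |digitDeviation w a n d| ≤ n * discrepancy (fun i : Fin n => w (a + i)) := by
  rcases eq_or_ne n 0 with rfl | hn
  · simp [digitDeviation]
  have hn' : (0 : ℝ) < n := by positivity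
  rw [discrepancy_eq_iSup_abs_digitDeviation_div w a hn, ← div_le_iff₀' hn']
  exact le_ciSup (f := fun d => |digitDeviation w a n d| / n) (Set.finite_range _).bddAbove d

theorem discrepancy_le_of_abs_digitDeviation_le (a : ℕ) {n : ℕ} (hn : n ≠ 0) {M : ℝ}
    (h : ∀ d, |digitDeviation w a n d| ≤ M) :
    discrepancy (fun i : Fin n => w (a + i)) ≤ M / n := by
  have : Nonempty (Fin r) := ⟨w 0⟩
  rw [discrepancy_eq_iSup_abs_digitDeviation_div w a hn]
  exact ciSup_le fun d => div_le_div_of_nonneg_right (h d) (Nat.cast_nonneg n)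

end Deviation

theorem exists_le_lt_succ_of_strictMono {c : ℕ → ℕ} (hc : StrictMono c) {T n : ℕ}
    (hn : c T ≤ n) : ∃ t ≥ T, c t ≤ n ∧ n < c (t + 1) := by
  have hex : ∃ s, n < c s := ⟨n + 1, Nat.lt_of_succ_le (hc.id_le (n + 1))⟩
  have hT : T < Nat.find hex := by
    by_contra! h
    exact (Nat.find_spec hex).not_ge ((hc.monotone h).trans hn)
  obtain ⟨t, ht⟩ : ∃ t, Nat.find hex = t + 1 := Nat.exists_eq_add_one_of_ne_zero (by omega)
  refine ⟨t, by omega, not_lt.1 (Nat.find_min hex (by omega)), ht ▸ Nat.find_spec hex⟩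

section Blocks

variable (w : ℕ → Fin r) (d : Fin r) {c : ℕ → ℕ} {ε : ℝ} {T : ℕ}

theorem abs_digitDeviation_blockStart_le (hc : Monotone c)
    (hblock : ∀ t ≥ T,
      |digitDeviation w (c t) (c (t + 1) - c t) d| ≤ ε * ((c (t + 1) - c t : ℕ) : ℝ))
    {t : ℕ} (ht : T ≤ t) :
    |digitDeviation w 0 (c t) d| ≤ c T + ε * ((c t : ℝ) - c T) := by
  set f : ℕ → ℝ := fun s => digitDeviation w 0 (c s) d
  have hstep : ∀ {s}, T ≤ s → s < t → dist (f s) (f (s + 1)) ≤ ε * ((c (s + 1) : ℝ) - c s) :=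
    fun {s} hs _ => by
      have hcs := hc (Nat.le_succ s)
      rw [dist_comm, Real.dist_eq, digitDeviation_sub w d 0 hcs, zero_add, ← Nat.cast_sub hcs]
      exact hblock s hs
  have htel := dist_le_Ico_sum_of_dist_le ht hstep
  rw [← mul_sum, sum_Ico_sub (fun s => (c s : ℝ)) ht, Real.dist_eq, abs_sub_comm] at htel
  linarith [abs_sub_abs_le_abs_sub (f t) (f T), abs_digitDeviation_le w d 0 (c T)]

theorem abs_digitDeviation_le_of_blocks (hc : StrictMono c) (hε : 0 ≤ ε)
    (hgap : ∀ t ≥ T, ((c (t + 1) - c t : ℕ) : ℝ) ≤ ε * c t)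
    (hblock : ∀ t ≥ T,
      |digitDeviation w (c t) (c (t + 1) - c t) d| ≤ ε * ((c (t + 1) - c t : ℕ) : ℝ))
    {n : ℕ} (hn : c T ≤ n) :
    |digitDeviation w 0 n d| ≤ c T + 2 * ε * n := by
  obtain ⟨t, hTt, hctn, hnct⟩ := exists_le_lt_succ_of_strictMono hc hn
  have hsplit := digitDeviation_sub w d 0 hctn
  rw [zero_add, sub_eq_iff_eq_add'] at hsplit
  have hhead := abs_digitDeviation_blockStart_le w d hc.monotone hblock hTt
  have htail : ((n - c t : ℕ) : ℝ) ≤ ε * c t :=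
    (Nat.cast_le.2 (by omega)).trans (hgap t hTt)
  have hct : (c t : ℝ) ≤ n := by exact_mod_cast hctn
  rw [hsplit]
  calc |digitDeviation w 0 (c t) d + digitDeviation w (c t) (n - c t) d|
      ≤ (c T + ε * ((c t : ℝ) - c T)) + ε * c t :=
        (abs_add_le _ _).trans (add_le_add hhead
          ((abs_digitDeviation_le w d _ _).trans htail))
    _ ≤ c T + 2 * ε * n := by nlinarith [(Nat.cast_nonneg (c T) : (0 : ℝ) ≤ c T)]

end Blocks

theorem limsup_le_of_le_add_div {f : ℕ → ℝ} {a C : ℝ} (hf : ∀ k, 0 ≤ f k)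
    (h : ∀ᶠ k in atTop, f k ≤ a + C / ((k : ℝ) + 1)) : limsup f atTop ≤ a := by
  have hlim : Tendsto (fun k : ℕ => a + C / ((k : ℝ) + 1)) atTop (𝓝 a) := by
    simpa [div_eq_mul_inv] using
      tendsto_const_nhds.add ((tendsto_one_div_add_atTop_nhds_zero_nat (𝕜 := ℝ)).const_mul C)
  exact (limsup_le_limsup h (isCoboundedUnder_le_of_le atTop hf)
    hlim.isBoundedUnder_le).trans hlim.limsup_eq.le

theorem statement17_general (ε : ℝ) (hε : 0 < ε) (r : ℕ)
    (w : ℕ → Fin r) (b : ℕ → ℕ) (hb : StrictMono b)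
    (t₀ : ℕ)
    (hgap : ∀ t > t₀, ((b (t + 1) - b t : ℕ) : ℝ) ≤ ε * (b t : ℝ))
    (hdisc : ∀ t > t₀,
      discrepancy (fun i : Fin (b (t + 1) - b t) => w (b t + 1 + i.val)) < ε) :
    Filter.limsup (fun k : ℕ => discrepancy (fun i : Fin (k + 1) => w i.val))
      Filter.atTop ≤ 2 * ε := by
  set c : ℕ → ℕ := fun t => b t + 1 with hc_def
  have hc : StrictMono c := fun _ _ h => Nat.succ_lt_succ (hb h)
  have hlen : ∀ t, c (t + 1) - c t = b (t + 1) - b t := fun t => Nat.add_sub_add_right _ _ _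
  have hgap' : ∀ t ≥ t₀ + 1, ((c (t + 1) - c t : ℕ) : ℝ) ≤ ε * c t := fun t ht => by
    rw [hlen, hc_def, Nat.cast_add_one]
    linarith [hgap t ht]
  have hblock : ∀ t ≥ t₀ + 1, ∀ d,
      |digitDeviation w (c t) (c (t + 1) - c t) d| ≤ ε * ((c (t + 1) - c t : ℕ) : ℝ) :=
    fun t ht d => by
      rw [hlen, mul_comm]
      exact (abs_digitDeviation_le_mul_discrepancy w d _ _).trans
        (mul_le_mul_of_nonneg_left (hdisc t ht).le (Nat.cast_nonneg _))
  refine limsup_le_of_le_add_div (C := c (t₀ + 1)) (fun k => discrepancy_nonneg _) ?_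
  filter_upwards [eventually_ge_atTop (b (t₀ + 1))] with k hk
  have hprefix := discrepancy_le_of_abs_digitDeviation_le w 0 k.succ_ne_zero fun d =>
    abs_digitDeviation_le_of_blocks w d hc hε.le hgap' (hblock · · d) (n := k + 1) (by simp only [hc_def]; omega)
  simp only [zero_add] at hprefix
  calc discrepancy (fun i : Fin (k + 1) => w i.val)
      ≤ (c (t₀ + 1) + 2 * ε * ((k + 1 : ℕ) : ℝ)) / ((k + 1 : ℕ) : ℝ) := hprefix
    _ = 2 * ε + c (t₀ + 1) / ((k : ℝ) + 1) := by push_cast; field_simp; ring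

theorem statement17 (ε : ℝ) (hε : 0 < ε) (r : ℕ) (hr : 2 ≤ r)
    (w : ℕ → Fin r) (b : ℕ → ℕ) (hb : StrictMono b) (hb0 : ∀ t, 0 < b t)
    (t₀ : ℕ)
    (hgap : ∀ t > t₀, ((b (t + 1) - b t : ℕ) : ℝ) ≤ ε * (b t : ℝ))
    (hdisc : ∀ t > t₀,
      discrepancy (fun i : Fin (b (t + 1) - b t) => w (b t + 1 + i.val)) < ε) :
    Filter.limsup (fun k : ℕ => discrepancy (fun i : Fin (k + 1) => w i.val))
      Filter.atTop ≤ 2 * ε :=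
  statement17_general ε hε r w b hb t₀ hgap hdisc
end

section
/- Let ε be a positive real, r a base, d a digit in {0,1,...,r−1}, (w_j)_{j≥0} an infinite sequence of elements of {0,1,...,r−1}, and (b_t)_{t≥0} an increasing sequence of positive integers. Suppose there is an integer t_0 such that for all t > t_0: occ((w_{b_t+1},...,w_{b_{t+1}}), d)/(b_{t+1} − b_t) < 1/r − ε. Then liminf_{t→∞} occ((w_0,...,w_{b_t}), d)/(b_t + 1) < 1/r − ε/2. -/
/-!
Write `c = 1/r - ε` and `A t` for the number of occurrences of `d` in `w_0, …, w_{b_t}`.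
Since `A (t+1) - A t` counts the occurrences in the `t`-th block, every block after `t₀` adds
at most `c` times its length, so `A t ≤ K + c b_t` for a constant `K` and all large `t`.
Dividing by `b_t + 1 → ∞` gives `liminf A t / (b_t + 1) ≤ c < 1/r - ε/2`.
-/

open Filter Finset

lemma card_filter_range_succ_eq_add_card_filter_Ioc (p : ℕ → Prop) [DecidablePred p]
    {m n : ℕ} (hmn : m ≤ n) :
    ((range (n + 1)).filter p).card =
      ((range (m + 1)).filter p).card + ((Ioc m n).filter p).card := by
  have hunion : range (n + 1) = range (m + 1) ∪ Ioc m n := by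
    rw [range_eq_Ico, range_eq_Ico, ← Ico_add_one_add_one_eq_Ioc,
      Ico_union_Ico_eq_Ico (Nat.zero_le _) (by omega)]
  have hdisj : Disjoint (range (m + 1)) (Ioc m n) := by
    rw [disjoint_left]
    intro x hx hx'
    simp only [mem_range, mem_Ioc] at hx hx'
    omega
  rw [hunion, filter_union, card_union_of_disjoint (disjoint_filter_filter hdisj)]

lemma natCast_le_mul_sub_of_div_lt {k m n : ℕ} {c : ℝ} (hmn : m < n)
    (h : (k : ℝ) / ((n - m : ℕ) : ℝ) < c) : (k : ℝ) ≤ c * ((n : ℝ) - m) := by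
  have hpos : (0 : ℝ) < ((n - m : ℕ) : ℝ) := by exact_mod_cast Nat.sub_pos_of_lt hmn
  rw [div_lt_iff₀ hpos, Nat.cast_sub hmn.le] at h
  exact h.le

lemma le_add_mul_sub_of_forall_ge_succ_le {a x : ℕ → ℝ} {c : ℝ} {N : ℕ}
    (hstep : ∀ n ≥ N, a (n + 1) ≤ a n + c * (x (n + 1) - x n)) :
    ∀ n ≥ N, a n ≤ a N + c * (x n - x N) := by
  intro n hn
  induction n, hn using Nat.le_induction with
  | base => simp
  | succ n hn ih => linarith [hstep n hn]

lemma liminf_div_add_one_le {α : Type*} {l : Filter α} [l.NeBot] {a x : α → ℝ} {K c : ℝ}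
    (ha : ∀ t, 0 ≤ a t) (hx : Tendsto x l atTop) (hbound : ∀ᶠ t in l, a t ≤ K + c * x t) :
    liminf (fun t => a t / (x t + 1)) l ≤ c := by
  have hx1 : Tendsto (fun t => x t + 1) l atTop := tendsto_atTop_add_const_right _ 1 hx
  -- `(K + c x) / (x + 1) = c + (K - c) / (x + 1)`
  have hlim : Tendsto (fun t => c + (K - c) * (x t + 1)⁻¹) l (nhds c) := by
    simpa using tendsto_const_nhds.add
      (tendsto_const_nhds.mul (tendsto_inv_atTop_zero.comp hx1) : Tendsto _ l (nhds ((K - c) * 0)))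
  have hle : ∀ᶠ t in l, a t / (x t + 1) ≤ c + (K - c) * (x t + 1)⁻¹ := by
    filter_upwards [hbound, hx1.eventually_gt_atTop 0] with t hat hpos
    rw [div_le_iff₀ hpos]
    field_simp
    linarith
  have hnonneg : ∀ᶠ t in l, 0 ≤ a t / (x t + 1) := by
    filter_upwards [hx1.eventually_gt_atTop 0] with t hpos
    exact div_nonneg (ha t) hpos.le
  calc liminf (fun t => a t / (x t + 1)) l
      ≤ liminf (fun t => c + (K - c) * (x t + 1)⁻¹) l :=
        liminf_le_liminf hle (isBoundedUnder_of_eventually_ge hnonneg) hlim.isCoboundedUnder_ge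
    _ = c := hlim.liminf_eq

theorem statement18_general (ε : ℝ) (hε : 0 < ε) (r : ℕ) (d : Fin r)
    (w : ℕ → Fin r) (b : ℕ → ℕ) (hb : StrictMono b)
    (t₀ : ℕ)
    (hseg : ∀ t > t₀,
      (((Finset.Ioc (b t) (b (t + 1))).filter (fun j => w j = d)).card : ℝ) /
          ((b (t + 1) - b t : ℕ) : ℝ) < 1 / (r : ℝ) - ε) :
    Filter.liminf (fun t : ℕ =>
        (((Finset.range (b t + 1)).filter (fun j => w j = d)).card : ℝ) /
          ((b t : ℝ) + 1))
      Filter.atTop < 1 / (r : ℝ) - ε / 2 := by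
  set c : ℝ := 1 / (r : ℝ) - ε
  set A : ℕ → ℝ := fun t => (((range (b t + 1)).filter (fun j => w j = d)).card : ℝ)
  have hstep : ∀ n ≥ t₀ + 1, A (n + 1) ≤ A n + c * ((b (n + 1) : ℝ) - b n) := by
    intro n hn
    have hlt : b n < b (n + 1) := hb n.lt_succ_self
    simp only [A, card_filter_range_succ_eq_add_card_filter_Ioc _ hlt.le, Nat.cast_add]
    linarith [natCast_le_mul_sub_of_div_lt hlt (hseg n hn)]
  have hgrowth : ∀ᶠ t in atTop, A t ≤ (A (t₀ + 1) - c * b (t₀ + 1)) + c * b t := by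
    filter_upwards [eventually_ge_atTop (t₀ + 1)] with t ht
    linarith [le_add_mul_sub_of_forall_ge_succ_le (x := fun n => (b n : ℝ)) hstep t ht]
  have hliminf : liminf (fun t => A t / ((b t : ℝ) + 1)) atTop ≤ c :=
    liminf_div_add_one_le (fun t => Nat.cast_nonneg _)
      (tendsto_natCast_atTop_atTop.comp hb.tendsto_atTop) hgrowth
  linarith

theorem statement18 (ε : ℝ) (hε : 0 < ε) (r : ℕ) (hr : 2 ≤ r) (d : Fin r)
    (w : ℕ → Fin r) (b : ℕ → ℕ) (hb : StrictMono b) (hb0 : ∀ t, 0 < b t)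
    (t₀ : ℕ)
    (hseg : ∀ t > t₀,
      (((Finset.Ioc (b t) (b (t + 1))).filter (fun j => w j = d)).card : ℝ) /
          ((b (t + 1) - b t : ℕ) : ℝ) < 1 / (r : ℝ) - ε) :
    Filter.liminf (fun t : ℕ =>
        (((Finset.range (b t + 1)).filter (fun j => w j = d)).card : ℝ) /
          ((b t : ℝ) + 1))
      Filter.atTop < 1 / (r : ℝ) - ε / 2 :=
  statement18_general ε hε r d w b hb t₀ hseg
end

section
/- Suppose that, for k ≥ 1, K_k is a subset of the real line consisting of N_k closed intervals each of length δ_k, and that each interval of K_k contains N_{k+1}/N_k disjoint intervals of K_{k+1}. If v_0 ∈ (0,1] is such that for every v < v_0 the series Σ_{k≥2} (δ_{k−1}/δ_k)·(N_k·δ_k^v)^{−1} converges, then the Hausdorff dimension of the set ⋂_{k≥1} K_k is greater than or equal to v_0. -/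
/-!
Mass distribution principle. The distribution functions of normalized Lebesgue measure on the
levels `K_k` agree off the interiors of the level-`k` intervals and differ by at most `1/N_k`
inside them, so they converge uniformly to a continuous distribution function. Its Stieltjes
measure `μ` gives every level-`k` interval mass `1/N_k` and is carried by `⋂ K_k`.
If `δ_{l+1} ≤ diam s = d < δ_l`, then `s` meets at most `d/δ_{l+1} + 2 ≤ 3d/δ_{l+1}` intervals
of level `l+1`, so `μ s ≤ 3d/(N_{l+1} δ_{l+1}) ≤ 3 t_l d^v`, where `t_l` is the `l`-th term of the
series for `v`. The terms are bounded, hence `μ s ≲ (diam s)^v`, so `μH[v]` does not vanish on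
`⋂ K_k` and its dimension is at least `v`, for every `v < v₀`.
-/

open Set MeasureTheory Filter Topology
open scoped NNReal ENNReal

noncomputable section

def ramp (c d x : ℝ) : ℝ := min 1 (max 0 ((x - c) / d))

lemma ramp_of_le {c d x : ℝ} (hd : 0 < d) (hx : x ≤ c) : ramp c d x = 0 := by
  have : (x - c) / d ≤ 0 := div_nonpos_of_nonpos_of_nonneg (by linarith) hd.le
  rw [ramp, max_eq_left this, min_eq_right zero_le_one]

lemma ramp_of_add_le {c d x : ℝ} (hd : 0 < d) (hx : c + d ≤ x) : ramp c d x = 1 := by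
  have : 1 ≤ (x - c) / d := (le_div_iff₀ hd).2 (by linarith)
  rw [ramp, max_eq_right (by linarith), min_eq_left this]

lemma monotone_ramp (c : ℝ) {d : ℝ} (hd : 0 ≤ d) : Monotone (ramp c d) := fun _ _ hxy =>
  min_le_min le_rfl (max_le_max le_rfl (div_le_div_of_nonneg_right (by linarith) hd))

lemma continuous_ramp (c d : ℝ) : Continuous (ramp c d) := by
  unfold ramp; fun_prop

lemma ramp_eq_of_Icc_subset {c d c' d' x : ℝ} (hd : 0 < d) (hd' : 0 < d')
    (hsub : Icc c' (c' + d') ⊆ Icc c (c + d)) (hx : x ∉ Ioo c (c + d)) :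
    ramp c' d' x = ramp c d x := by
  obtain ⟨hc, hcd⟩ := (Icc_subset_Icc_iff (by linarith)).1 hsub
  rcases le_or_gt x c with hxc | hxc
  · rw [ramp_of_le hd hxc, ramp_of_le hd' (hxc.trans hc)]
  · have hx' : c + d ≤ x := not_lt.1 fun h => hx ⟨hxc, h⟩
    rw [ramp_of_add_le hd hx', ramp_of_add_le hd' (hcd.trans hx')]

lemma lt_or_lt_of_disjoint_Icc {p q r s : ℝ} (h : Disjoint (Icc p q) (Icc r s)) (hpq : p ≤ q)
    (hrs : r ≤ s) : q < r ∨ s < p := by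
  by_contra! H
  exact Set.disjoint_left.1 h (show max p r ∈ Icc p q from ⟨le_max_left _ _, max_le hpq H.1⟩)
    ⟨le_max_right _ _, max_le H.2 hrs⟩

lemma card_mul_le_of_pairwiseDisjoint_Icc {ι : Type*} {T : Finset ι} {x : ι → ℝ} {e p q : ℝ}
    (hdisj : (T : Set ι).PairwiseDisjoint fun j => Icc (x j) (x j + e))
    (hsub : ∀ j ∈ T, Icc (x j) (x j + e) ⊆ Icc p q) (hpq : p ≤ q) :
    T.card * e ≤ q - p := by
  have hvol : volume (⋃ j ∈ T, Icc (x j) (x j + e)) ≤ volume (Icc p q) :=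
    measure_mono (iUnion₂_subset hsub)
  rw [measure_biUnion_finset hdisj fun _ _ => measurableSet_Icc] at hvol
  simp only [Real.volume_Icc, add_sub_cancel_left, Finset.sum_const, nsmul_eq_mul] at hvol
  rwa [← ENNReal.ofReal_natCast, ← ENNReal.ofReal_mul (Nat.cast_nonneg _),
    ENNReal.ofReal_le_ofReal_iff (by linarith)] at hvol

lemma measure_le_card_mul_of_ae_mem_iUnion {X ι : Type*} [MeasurableSpace X] {μ : Measure X}
    {I : ι → Set X} {m : ℝ≥0∞} (hI : ∀ᵐ x ∂μ, x ∈ ⋃ i, I i) (hm : ∀ i, μ (I i) ≤ m)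
    {s : Set X} {T : Finset ι} (hT : ∀ i, (I i ∩ s).Nonempty → i ∈ T) :
    μ s ≤ T.card * m := by
  calc μ s = μ (s ∩ ⋃ i, I i) := (measure_inter_conull hI).symm
    _ ≤ μ (⋃ i ∈ T, I i) := measure_mono fun x ⟨hxs, hx⟩ => by
        obtain ⟨i, hi⟩ := mem_iUnion.1 hx
        exact mem_biUnion (hT i ⟨x, hi, hxs⟩) hi
    _ ≤ ∑ i ∈ T, μ (I i) := measure_biUnion_finset_le T I
    _ ≤ T.card * m := by simpa using Finset.sum_le_sum fun i _ => hm i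

lemma card_mul_le_diam_add_of_pairwiseDisjoint_Icc {ι : Type*} {T : Finset ι} {x : ι → ℝ}
    {e : ℝ} {s : Set ℝ} (hs : Bornology.IsBounded s)
    (hdisj : (T : Set ι).PairwiseDisjoint fun j => Icc (x j) (x j + e))
    (hmeet : ∀ j ∈ T, (Icc (x j) (x j + e) ∩ s).Nonempty) (he : 0 ≤ e) :
    T.card * e ≤ Metric.diam s + 2 * e := by
  have hdiam : Metric.diam s = sSup s - sInf s := Real.diam_eq hs
  have hsub : ∀ j ∈ T, Icc (x j) (x j + e) ⊆ Icc (sInf s - e) (sSup s + e) := fun j hj => by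
    obtain ⟨y, ⟨hy1, hy2⟩, hys⟩ := hmeet j hj
    obtain ⟨hinf, hsup⟩ := hs.subset_Icc_sInf_sSup hys
    exact Icc_subset_Icc (by linarith) (by linarith)
  have := card_mul_le_of_pairwiseDisjoint_Icc hdisj hsub
    (by linarith [Metric.diam_nonneg (s := s)])
  linarith

lemma exists_succ_le_of_lt {u : ℕ → ℝ} {d : ℝ} (hu : ∃ n, u n ≤ d) (h0 : d < u 0) :
    ∃ l, u (l + 1) ≤ d ∧ d < u l := by
  by_contra! H
  obtain ⟨n, hn⟩ := hu
  have hlt : ∀ n, d < u n := fun n => by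
    induction n with
    | zero => exact h0
    | succ l ih => exact lt_of_not_ge fun hle => (H l hle).not_gt ih
  exact (hlt n).not_ge hn

/-- With `e = δ (l + 1) ≤ d < δ l = D` and `n = N (l + 1)`, the right-hand side is `3 d ^ v`
times the `l`-th term of the series. -/
lemma add_two_mul_div_le {d e D n v : ℝ} (he : 0 < e) (hed : e ≤ d) (hdD : d < D) (hn : 0 < n)
    (hv : 0 ≤ v) : (d + 2 * e) / (n * e) ≤ 3 * (D / e * (n * e ^ v)⁻¹) * d ^ v := by
  have hd : 0 < d := he.trans_le hed
  have hdv : 0 < d ^ v := Real.rpow_pos_of_pos hd v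
  have hev : 0 < e ^ v := Real.rpow_pos_of_pos he v
  have hratio : d / d ^ v ≤ D / e ^ v :=
    div_le_div₀ (hd.trans hdD).le hdD.le hev (Real.rpow_le_rpow he.le hed hv)
  calc (d + 2 * e) / (n * e) ≤ 3 * (d / d ^ v) * d ^ v / (n * e) := by
        rw [mul_assoc, div_mul_cancel₀ _ hdv.ne']
        gcongr
        linarith
    _ ≤ 3 * (D / e ^ v) * d ^ v / (n * e) := by gcongr
    _ = 3 * (D / e * (n * e ^ v)⁻¹) * d ^ v := by
        field_simp

theorem le_dimH_of_measure_le_mul_ediam_rpow {X : Type*} [EMetricSpace X] [MeasurableSpace X]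
    [BorelSpace X] {μ : Measure X} {E : Set X} {v : ℝ≥0} {r C : ℝ≥0∞} (hr : 0 < r) (hC : C ≠ ∞)
    (hE : μ E ≠ 0) (hμ : ∀ s, Metric.ediam s ≤ r → μ s ≤ C * Metric.ediam s ^ (v : ℝ)) :
    (v : ℝ≥0∞) ≤ dimH E := by
  have hle : C⁻¹ • μ ≤ μH[v] := Measure.le_hausdorffMeasure v _ r hr fun s hs => by
    rw [Measure.smul_apply, smul_eq_mul, mul_comm, ← div_eq_mul_inv]
    exact ENNReal.div_le_of_le_mul' (hμ s hs)
  refine le_dimH_of_hausdorffMeasure_ne_zero fun hH => hE ?_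
  have hzero : C⁻¹ * μ E = 0 := le_antisymm (hH ▸ hle E) zero_le
  exact (mul_eq_zero.1 hzero).resolve_left (ENNReal.inv_ne_zero.2 hC)

variable {N : ℕ → ℕ} {δ : ℕ → ℝ} {a : (k : ℕ) → Fin (N k) → ℝ}

def cell (a : (k : ℕ) → Fin (N k) → ℝ) (δ : ℕ → ℝ) (k : ℕ) (i : Fin (N k)) : Set ℝ :=
  Icc (a k i) (a k i + δ k)

def level (a : (k : ℕ) → Fin (N k) → ℝ) (δ : ℕ → ℝ) (k : ℕ) : Set ℝ := ⋃ i, cell a δ k i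

structure IsNestedIntervalScheme (N : ℕ → ℕ) (δ : ℕ → ℝ) (a : (k : ℕ) → Fin (N k) → ℝ) :
    Prop where
  N_pos : ∀ k, 0 < N k
  δ_pos : ∀ k, 0 < δ k
  pairwise_disjoint : ∀ k, Pairwise fun i j => Disjoint (cell a δ k i) (cell a δ k j)
  dvd_succ : ∀ k, N k ∣ N (k + 1)
  card_children : ∀ k i, Nat.card {j // cell a δ (k + 1) j ⊆ cell a δ k i} = N (k + 1) / N k

open Classical in
def children (a : (k : ℕ) → Fin (N k) → ℝ) (δ : ℕ → ℝ) (k : ℕ) (i : Fin (N k)) :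
    Finset (Fin (N (k + 1))) :=
  {j | cell a δ (k + 1) j ⊆ cell a δ k i}

lemma mem_children {k : ℕ} {i : Fin (N k)} {j : Fin (N (k + 1))} :
    j ∈ children a δ k i ↔ cell a δ (k + 1) j ⊆ cell a δ k i := by
  classical
  simp [children]

def IsGap (a : (k : ℕ) → Fin (N k) → ℝ) (δ : ℕ → ℝ) (k : ℕ) (x : ℝ) : Prop :=
  ∀ i, x ∉ Ioo (a k i) (a k i + δ k)

/-- The distribution function of normalized Lebesgue measure on `level a δ k`. -/
def cdf (a : (k : ℕ) → Fin (N k) → ℝ) (δ : ℕ → ℝ) (k : ℕ) (x : ℝ) : ℝ :=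
  (N k : ℝ)⁻¹ * ∑ i, ramp (a k i) (δ k) x

lemma continuous_cdf (k : ℕ) : Continuous (cdf a δ k) :=
  continuous_const.mul (continuous_finsetSum _ fun _ _ => continuous_ramp _ _)

def limitCDF (a : (k : ℕ) → Fin (N k) → ℝ) (δ : ℕ → ℝ) (x : ℝ) : ℝ :=
  limUnder atTop fun k => cdf a δ k x

namespace IsNestedIntervalScheme

variable (h : IsNestedIntervalScheme N δ a)
include h

lemma card_children_eq (k : ℕ) (i : Fin (N k)) : (children a δ k i).card = N (k + 1) / N k := by
  classical
  rw [← h.card_children k i, Nat.card_eq_fintype_card, Fintype.card_subtype, children]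

lemma cell_nonempty (k : ℕ) (i : Fin (N k)) : (cell a δ k i).Nonempty :=
  nonempty_Icc.2 (by linarith [h.δ_pos k])

lemma disjoint_children (k : ℕ) {i i' : Fin (N k)} (hii' : i ≠ i') :
    Disjoint (children a δ k i) (children a δ k i') := by
  refine Finset.disjoint_left.2 fun j hj hj' => ?_
  obtain ⟨x, hx⟩ := h.cell_nonempty (k + 1) j
  exact Set.disjoint_left.1 (h.pairwise_disjoint k hii') (mem_children.1 hj hx)
    (mem_children.1 hj' hx)

lemma biUnion_children (k : ℕ) : Finset.univ.biUnion (children a δ k) = Finset.univ := by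
  refine Finset.eq_univ_of_card _ ?_
  rw [Finset.card_biUnion fun i _ i' _ => h.disjoint_children k]
  simp only [h.card_children_eq, Finset.sum_const, Finset.card_univ, Fintype.card_fin,
    smul_eq_mul, Nat.mul_div_cancel' (h.dvd_succ k)]

lemma exists_parent (k : ℕ) (j : Fin (N (k + 1))) : ∃ i, cell a δ (k + 1) j ⊆ cell a δ k i := by
  have hj : j ∈ Finset.univ.biUnion (children a δ k) := by
    rw [h.biUnion_children]; exact Finset.mem_univ j
  obtain ⟨i, -, hi⟩ := Finset.mem_biUnion.1 hj
  exact ⟨i, mem_children.1 hi⟩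

lemma div_mul_δ_succ_le (k : ℕ) : ((N (k + 1) / N k : ℕ) : ℝ) * δ (k + 1) ≤ δ k := by
  have i : Fin (N k) := ⟨0, h.N_pos k⟩
  have := card_mul_le_of_pairwiseDisjoint_Icc (T := children a δ k i) (x := a (k + 1))
    (fun j _ j' _ hjj' => h.pairwise_disjoint (k + 1) hjj') (fun j hj => mem_children.1 hj)
    (by linarith [h.δ_pos k])
  rwa [h.card_children_eq, add_sub_cancel_left] at this

lemma δ_succ_le (k : ℕ) : δ (k + 1) ≤ δ k := by
  have hdiv : (1 : ℝ) ≤ (N (k + 1) / N k : ℕ) := by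
    exact_mod_cast Nat.div_pos (Nat.le_of_dvd (h.N_pos _) (h.dvd_succ k)) (h.N_pos k)
  nlinarith [h.div_mul_δ_succ_le k, h.δ_pos (k + 1)]

lemma antitone_δ : Antitone δ := antitone_nat_of_succ_le h.δ_succ_le

lemma antitone_N_mul_δ : Antitone fun k => (N k : ℝ) * δ k := by
  refine antitone_nat_of_succ_le fun k => ?_
  have hN : (N (k + 1) : ℝ) = N k * (N (k + 1) / N k : ℕ) := by
    rw [← Nat.cast_mul, Nat.mul_div_cancel' (h.dvd_succ k)]
  rw [hN, mul_assoc]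
  exact mul_le_mul_of_nonneg_left (h.div_mul_δ_succ_le k) (Nat.cast_nonneg _)

lemma tendsto_δ (hN : Tendsto (fun k => (N k : ℝ)⁻¹) atTop (𝓝 0)) :
    Tendsto δ atTop (𝓝 0) := by
  refine squeeze_zero (fun k => (h.δ_pos k).le) (fun k => ?_) (by
    simpa using hN.const_mul (N 0 * δ 0))
  have hNk : (0 : ℝ) < N k := Nat.cast_pos.2 (h.N_pos k)
  rw [← div_eq_mul_inv, le_div_iff₀ hNk, mul_comm]
  exact h.antitone_N_mul_δ (Nat.zero_le k)

lemma monotone_cdf (k : ℕ) : Monotone (cdf a δ k) := fun _ _ hxy =>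
  mul_le_mul_of_nonneg_left
    (Finset.sum_le_sum fun i _ => monotone_ramp _ (h.δ_pos k).le hxy) (by positivity)

lemma isGap_succ {k : ℕ} {x : ℝ} (hx : IsGap a δ k x) : IsGap a δ (k + 1) x := by
  intro j hj
  obtain ⟨i, hi⟩ := h.exists_parent k j
  obtain ⟨hl, hr⟩ := (Icc_subset_Icc_iff (by linarith [h.δ_pos (k + 1)])).1 hi
  exact hx i ⟨hl.trans_lt hj.1, hj.2.trans_le hr⟩

lemma isGap_of_le {k m : ℕ} (hkm : k ≤ m) {x : ℝ} (hx : IsGap a δ k x) : IsGap a δ m x := by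
  induction m, hkm using Nat.le_induction with
  | base => exact hx
  | succ m _ ih => exact h.isGap_succ ih

lemma isGap_of_mem_cell {k : ℕ} {i : Fin (N k)} {x : ℝ} (hx : x ∈ cell a δ k i)
    (hxi : x ∉ Ioo (a k i) (a k i + δ k)) : IsGap a δ k x := by
  intro j hj
  obtain rfl : j = i := by
    by_contra hji
    exact Set.disjoint_left.1 (h.pairwise_disjoint k hji) (Ioo_subset_Icc_self hj) hx
  exact hxi hj

lemma isGap_left (k : ℕ) (i : Fin (N k)) : IsGap a δ k (a k i) :=
  h.isGap_of_mem_cell (left_mem_Icc.2 (by linarith [h.δ_pos k])) fun hx => lt_irrefl _ hx.1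

lemma isGap_right (k : ℕ) (i : Fin (N k)) : IsGap a δ k (a k i + δ k) :=
  h.isGap_of_mem_cell (right_mem_Icc.2 (by linarith [h.δ_pos k])) fun hx => lt_irrefl _ hx.2

lemma cdf_succ_of_isGap {k : ℕ} {x : ℝ} (hx : IsGap a δ k x) :
    cdf a δ (k + 1) x = cdf a δ k x := by
  have hchildren : ∀ i, ∑ j ∈ children a δ k i, ramp (a (k + 1) j) (δ (k + 1)) x =
      ((N (k + 1) / N k : ℕ) : ℝ) * ramp (a k i) (δ k) x := fun i => by
    rw [Finset.sum_congr rfl fun j hj => ramp_eq_of_Icc_subset (h.δ_pos k) (h.δ_pos (k + 1))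
      (mem_children.1 hj) (hx i), Finset.sum_const, h.card_children_eq, nsmul_eq_mul]
  have hNk : (N k : ℝ) ≠ 0 := Nat.cast_ne_zero.2 (h.N_pos k).ne'
  have hNk' : (N (k + 1) : ℝ) ≠ 0 := Nat.cast_ne_zero.2 (h.N_pos (k + 1)).ne'
  rw [cdf, cdf, ← h.biUnion_children k,
    Finset.sum_biUnion fun i _ i' _ => h.disjoint_children k]
  simp_rw [hchildren, ← Finset.mul_sum, Nat.cast_div (h.dvd_succ k) hNk]
  field_simp

lemma cdf_eq_of_isGap {k m : ℕ} (hkm : k ≤ m) {x : ℝ} (hx : IsGap a δ k x) :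
    cdf a δ m x = cdf a δ k x := by
  induction m, hkm using Nat.le_induction with
  | base => rfl
  | succ m hkm ih => rw [h.cdf_succ_of_isGap (h.isGap_of_le hkm hx), ih]

lemma cdf_right_eq (k : ℕ) (i : Fin (N k)) :
    cdf a δ k (a k i + δ k) = cdf a δ k (a k i) + (N k : ℝ)⁻¹ := by
  have hδ := h.δ_pos k
  have hjump : ∑ j, (ramp (a k j) (δ k) (a k i + δ k) - ramp (a k j) (δ k) (a k i)) = 1 := by
    rw [Finset.sum_eq_single i]
    · rw [ramp_of_add_le hδ le_rfl, ramp_of_le hδ le_rfl, sub_zero]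
    · intro j _ hji
      rcases lt_or_lt_of_disjoint_Icc (h.pairwise_disjoint k hji) (by linarith) (by linarith)
        with hj | hj
      · rw [ramp_of_add_le hδ (by linarith), ramp_of_add_le hδ (by linarith), sub_self]
      · rw [ramp_of_le hδ (by linarith), ramp_of_le hδ (by linarith), sub_zero]
    · exact fun hi => absurd (Finset.mem_univ i) hi
  rw [Finset.sum_sub_distrib, sub_eq_iff_eq_add'] at hjump
  rw [cdf, cdf, hjump, mul_add, mul_one]

lemma abs_cdf_sub_le {k m : ℕ} (hkm : k ≤ m) (x : ℝ) :
    |cdf a δ m x - cdf a δ k x| ≤ (N k : ℝ)⁻¹ := by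
  by_cases hx : IsGap a δ k x
  · rw [h.cdf_eq_of_isGap hkm hx, sub_self, abs_zero]
    positivity
  obtain ⟨i, hi⟩ : ∃ i, x ∈ Ioo (a k i) (a k i + δ k) := by simpa [IsGap] using hx
  -- both values lie between the values at the endpoints of cell `i`, where the two functions
  -- agree and which differ by `(N k)⁻¹`
  have hleft := h.cdf_eq_of_isGap hkm (h.isGap_left k i)
  have hright := h.cdf_eq_of_isGap hkm (h.isGap_right k i)
  have hjump := h.cdf_right_eq k i
  rw [abs_sub_le_iff]
  constructor <;> linarith [h.monotone_cdf k hi.1.le, h.monotone_cdf k hi.2.le,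
    h.monotone_cdf m hi.1.le, h.monotone_cdf m hi.2.le]

lemma tendsto_inv_N {v : ℝ≥0} (ht : Tendsto (fun k => δ k / δ (k + 1) *
      ((N (k + 1) : ℝ) * δ (k + 1) ^ (v : ℝ))⁻¹) atTop (𝓝 0)) :
    Tendsto (fun k => (N k : ℝ)⁻¹) atTop (𝓝 0) := by
  refine (tendsto_add_atTop_iff_nat 1).1 (squeeze_zero (fun _ => by positivity) (fun k => ?_)
    (by simpa only [mul_zero] using ht.const_mul (δ 0 ^ (v : ℝ))))
  have hδk := h.δ_pos (k + 1)
  have hNk : (0 : ℝ) < N (k + 1) := Nat.cast_pos.2 (h.N_pos (k + 1))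
  have hδv : 0 < δ (k + 1) ^ (v : ℝ) := Real.rpow_pos_of_pos hδk _
  have hδ0v : 0 < δ 0 ^ (v : ℝ) := Real.rpow_pos_of_pos (h.δ_pos 0) _
  calc (N (k + 1) : ℝ)⁻¹
      = δ (k + 1) ^ (v : ℝ) * ((N (k + 1) : ℝ) * δ (k + 1) ^ (v : ℝ))⁻¹ := by field_simp
    _ ≤ δ 0 ^ (v : ℝ) * ((N (k + 1) : ℝ) * δ (k + 1) ^ (v : ℝ))⁻¹ := by
        gcongr
        exact h.antitone_δ (Nat.zero_le _)
    _ ≤ δ 0 ^ (v : ℝ) * (δ k / δ (k + 1) * ((N (k + 1) : ℝ) * δ (k + 1) ^ (v : ℝ))⁻¹) := by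
        refine mul_le_mul_of_nonneg_left (le_mul_of_one_le_left (by positivity) ?_) hδ0v.le
        exact (one_le_div hδk).2 (h.δ_succ_le k)

section Measure

variable (hN : Tendsto (fun k => (N k : ℝ)⁻¹) atTop (𝓝 0))
include hN

lemma tendsto_cdf (x : ℝ) : Tendsto (fun k => cdf a δ k x) atTop (𝓝 (limitCDF a δ x)) := by
  have hcauchy : CauchySeq fun k => cdf a δ k x :=
    Metric.cauchySeq_iff'.2 fun ε hε => (hN.eventually_lt_const hε).exists.imp
      fun K hK m hm => (h.abs_cdf_sub_le hm x).trans_lt hK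
  exact tendsto_nhds_limUnder (cauchySeq_tendsto_of_complete hcauchy)

lemma abs_limitCDF_sub_le (k : ℕ) (x : ℝ) : |limitCDF a δ x - cdf a δ k x| ≤ (N k : ℝ)⁻¹ :=
  le_of_tendsto ((h.tendsto_cdf hN x).sub_const _).abs
    ((eventually_ge_atTop k).mono fun _ hm => h.abs_cdf_sub_le hm x)

lemma limitCDF_eq_of_isGap {k : ℕ} {x : ℝ} (hx : IsGap a δ k x) :
    limitCDF a δ x = cdf a δ k x :=
  tendsto_nhds_unique (h.tendsto_cdf hN x) (tendsto_const_nhds.congr'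
    ((eventually_ge_atTop k).mono fun _ hm => (h.cdf_eq_of_isGap hm hx).symm))

lemma monotone_limitCDF : Monotone (limitCDF a δ) := fun x y hxy =>
  le_of_tendsto_of_tendsto' (h.tendsto_cdf hN x) (h.tendsto_cdf hN y)
    fun k => h.monotone_cdf k hxy

lemma continuous_limitCDF : Continuous (limitCDF a δ) := by
  have hunif : TendstoUniformly (cdf a δ) (limitCDF a δ) atTop :=
    Metric.tendstoUniformly_iff.2 fun ε hε => (hN.eventually_lt_const hε).mono
      fun k hk x => by
        rw [Real.dist_eq]
        exact (h.abs_limitCDF_sub_le hN k x).trans_lt hk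
  exact hunif.continuous (Frequently.of_forall continuous_cdf)

lemma tendsto_limitCDF_atBot : Tendsto (limitCDF a δ) atBot (𝓝 0) := by
  obtain ⟨M, hM⟩ := (Set.finite_range (a 0)).bddBelow
  refine tendsto_const_nhds.congr' ((eventually_le_atBot M).mono fun x hx => ?_)
  have hle : ∀ i, x ≤ a 0 i := fun i => hx.trans (hM (mem_range_self i))
  rw [h.limitCDF_eq_of_isGap hN fun i hi => (hle i).not_gt hi.1, cdf,
    Finset.sum_eq_zero fun i _ => ramp_of_le (h.δ_pos 0) (hle i), mul_zero]

lemma tendsto_limitCDF_atTop : Tendsto (limitCDF a δ) atTop (𝓝 1) := by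
  obtain ⟨M, hM⟩ := (Set.finite_range fun i => a 0 i + δ 0).bddAbove
  refine tendsto_const_nhds.congr' ((eventually_ge_atTop M).mono fun x hx => ?_)
  have hle : ∀ i, a 0 i + δ 0 ≤ x := fun i => (hM (mem_range_self i)).trans hx
  have hN0 : (N 0 : ℝ) ≠ 0 := Nat.cast_ne_zero.2 (h.N_pos 0).ne'
  rw [h.limitCDF_eq_of_isGap hN fun i hi => (hle i).not_gt hi.2, cdf,
    Finset.sum_congr rfl fun i _ => ramp_of_add_le (h.δ_pos 0) (hle i)]
  simp [hN0]

def stieltjesFunction : StieltjesFunction ℝ where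
  toFun := limitCDF a δ
  mono' := h.monotone_limitCDF hN
  right_continuous' _ := (h.continuous_limitCDF hN).continuousWithinAt

protected def measure : Measure ℝ := (h.stieltjesFunction hN).measure

lemma measure_Icc (p q : ℝ) :
    h.measure hN (Icc p q) = ENNReal.ofReal (limitCDF a δ q - limitCDF a δ p) := by
  rw [IsNestedIntervalScheme.measure, StieltjesFunction.measure_Icc]
  change ENNReal.ofReal (limitCDF a δ q - Function.leftLim (limitCDF a δ) p) = _
  rw [(h.continuous_limitCDF hN).continuousWithinAt.leftLim_eq]

lemma limitCDF_right_eq (k : ℕ) (i : Fin (N k)) :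
    limitCDF a δ (a k i + δ k) = limitCDF a δ (a k i) + (N k : ℝ)⁻¹ := by
  rw [h.limitCDF_eq_of_isGap hN (h.isGap_right k i), h.limitCDF_eq_of_isGap hN (h.isGap_left k i),
    h.cdf_right_eq]

lemma measure_cell (k : ℕ) (i : Fin (N k)) : h.measure hN (cell a δ k i) = (N k : ℝ≥0∞)⁻¹ := by
  rw [cell, h.measure_Icc, h.limitCDF_right_eq hN, add_sub_cancel_left,
    ENNReal.ofReal_inv_of_pos (Nat.cast_pos.2 (h.N_pos k)), ENNReal.ofReal_natCast]

lemma measure_singleton (x : ℝ) : h.measure hN {x} = 0 := by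
  rw [← Icc_self, h.measure_Icc, sub_self, ENNReal.ofReal_zero]

lemma measure_univ : h.measure hN univ = 1 := by
  rw [IsNestedIntervalScheme.measure, (h.stieltjesFunction hN).measure_univ
    (h.tendsto_limitCDF_atBot hN) (h.tendsto_limitCDF_atTop hN), sub_zero, ENNReal.ofReal_one]

lemma ae_mem_level (k : ℕ) : ∀ᵐ x ∂h.measure hN, x ∈ level a δ k := by
  have hlevel : h.measure hN (level a δ k) = 1 := by
    rw [level, measure_iUnion (h.pairwise_disjoint k) fun _ => measurableSet_Icc]
    simp only [h.measure_cell hN, tsum_fintype, Finset.sum_const, Finset.card_univ,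
      Fintype.card_fin, nsmul_eq_mul]
    exact ENNReal.mul_inv_cancel (Nat.cast_ne_zero.2 (h.N_pos k).ne') (ENNReal.natCast_ne_top _)
  have hmeas : MeasurableSet (level a δ k) := MeasurableSet.iUnion fun _ => measurableSet_Icc
  change h.measure hN (level a δ k)ᶜ = 0
  rw [measure_compl hmeas (by simp [hlevel]), hlevel, h.measure_univ, tsub_self]

lemma measure_le_diam_add {s : Set ℝ} (hs : Bornology.IsBounded s) (l : ℕ) :
    h.measure hN s ≤ ENNReal.ofReal ((Metric.diam s + 2 * δ l) / (N l * δ l)) := by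
  classical
  set T : Finset (Fin (N l)) := {j | (cell a δ l j ∩ s).Nonempty}
  have hcard : T.card * δ l ≤ Metric.diam s + 2 * δ l :=
    card_mul_le_diam_add_of_pairwiseDisjoint_Icc hs
      (fun j _ j' _ hjj' => h.pairwise_disjoint l hjj') (fun j hj => (Finset.mem_filter.1 hj).2)
      (h.δ_pos l).le
  have hNl : (0 : ℝ) < N l := Nat.cast_pos.2 (h.N_pos l)
  calc h.measure hN s ≤ T.card * (N l : ℝ≥0∞)⁻¹ :=
        measure_le_card_mul_of_ae_mem_iUnion (h.ae_mem_level hN l)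
          (fun j => (h.measure_cell hN l j).le)
          fun j hj => Finset.mem_filter.2 ⟨Finset.mem_univ j, hj⟩
    _ = ENNReal.ofReal (T.card / N l) := by
        rw [ENNReal.ofReal_div_of_pos hNl, ENNReal.ofReal_natCast, ENNReal.ofReal_natCast,
          div_eq_mul_inv]
    _ ≤ ENNReal.ofReal ((Metric.diam s + 2 * δ l) / (N l * δ l)) := by
        refine ENNReal.ofReal_le_ofReal ?_
        rw [div_le_div_iff₀ hNl (mul_pos hNl (h.δ_pos l))]
        nlinarith

lemma measure_le_mul_ediam_rpow {v : ℝ≥0} {B : ℝ}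
    (hB : ∀ k, δ k / δ (k + 1) * ((N (k + 1) : ℝ) * δ (k + 1) ^ (v : ℝ))⁻¹ ≤ B) {s : Set ℝ}
    (hs : Metric.ediam s ≤ ENNReal.ofReal (δ 0 / 2)) :
    h.measure hN s ≤ ENNReal.ofReal (3 * B) * Metric.ediam s ^ (v : ℝ) := by
  rcases eq_or_ne (Metric.ediam s) 0 with hs0 | hs0
  · rcases (Metric.ediam_eq_zero_iff.1 hs0).eq_empty_or_singleton with rfl | ⟨x, rfl⟩
    · simp
    · simp [h.measure_singleton hN]
  have hfin : Metric.ediam s ≠ ∞ := ne_top_of_le_ne_top ENNReal.ofReal_ne_top hs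
  have hediam : Metric.ediam s = ENNReal.ofReal (Metric.diam s) :=
    (ENNReal.ofReal_toReal hfin).symm
  have hd : 0 < Metric.diam s := ENNReal.toReal_pos hs0 hfin
  have hdδ : Metric.diam s < δ 0 := by
    have : Metric.diam s ≤ δ 0 / 2 := by
      have := ENNReal.toReal_mono ENNReal.ofReal_ne_top hs
      rwa [ENNReal.toReal_ofReal (half_pos (h.δ_pos 0)).le] at this
    linarith [h.δ_pos 0]
  obtain ⟨l, hl, hl'⟩ := exists_succ_le_of_lt
    ((h.tendsto_δ hN).eventually_le_const hd).exists hdδ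
  calc h.measure hN s
      ≤ ENNReal.ofReal ((Metric.diam s + 2 * δ (l + 1)) / (N (l + 1) * δ (l + 1))) :=
        h.measure_le_diam_add hN (Metric.isBounded_iff_ediam_ne_top.2 hfin) (l + 1)
    _ ≤ ENNReal.ofReal (3 * B * Metric.diam s ^ (v : ℝ)) := by
        gcongr
        refine (add_two_mul_div_le (h.δ_pos _) hl hl' (Nat.cast_pos.2 (h.N_pos _))
          v.coe_nonneg).trans ?_
        gcongr
        exact hB l
    _ = ENNReal.ofReal (3 * B) * Metric.ediam s ^ (v : ℝ) := by
        rw [ENNReal.ofReal_mul' (by positivity), hediam, ENNReal.ofReal_rpow_of_pos hd]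

end Measure

theorem le_dimH_iInter_level {v : ℝ≥0} (hsum : Summable fun k => δ k / δ (k + 1) *
      ((N (k + 1) : ℝ) * δ (k + 1) ^ (v : ℝ))⁻¹) :
    (v : ℝ≥0∞) ≤ dimH (⋂ k, level a δ k) := by
  have ht := hsum.tendsto_atTop_zero
  obtain ⟨B, hB⟩ := ht.bddAbove_range
  have hN := h.tendsto_inv_N ht
  have hae : ∀ᵐ x ∂h.measure hN, x ∈ ⋂ k, level a δ k := by
    simpa only [mem_iInter] using ae_all_iff.2 (h.ae_mem_level hN)
  have hE : h.measure hN (⋂ k, level a δ k) = 1 := by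
    rw [measure_congr (ae_eq_univ (s := ⋂ k, level a δ k) |>.2 hae), h.measure_univ hN]
  exact le_dimH_of_measure_le_mul_ediam_rpow (ENNReal.ofReal_pos.2 (half_pos (h.δ_pos 0)))
    ENNReal.ofReal_ne_top (by simp [hE])
    fun s hs => h.measure_le_mul_ediam_rpow hN (fun k => hB (mem_range_self k)) hs

end IsNestedIntervalScheme

end

theorem statement19_general (N : ℕ → ℕ) (δ : ℕ → ℝ) (a : (k : ℕ) → Fin (N k) → ℝ)
    (K : ℕ → Set ℝ)
    (hN : ∀ k, 1 ≤ k → 0 < N k) (hδ : ∀ k, 1 ≤ k → 0 < δ k)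
    (hK : ∀ k, 1 ≤ k → K k = ⋃ i : Fin (N k), Set.Icc (a k i) (a k i + δ k))
    (hdisj : ∀ k, 1 ≤ k → ∀ i j : Fin (N k), i ≠ j →
      Disjoint (Set.Icc (a k i) (a k i + δ k)) (Set.Icc (a k j) (a k j + δ k)))
    (hdvd : ∀ k, 1 ≤ k → N k ∣ N (k + 1))
    (hsub : ∀ k, 1 ≤ k → ∀ i : Fin (N k),
      Nat.card {j : Fin (N (k + 1)) //
          Set.Icc (a (k + 1) j) (a (k + 1) j + δ (k + 1)) ⊆
            Set.Icc (a k i) (a k i + δ k)} = N (k + 1) / N k)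
    (v₀ : ℝ)
    (hsum : ∀ v : ℝ, v < v₀ →
      Summable (fun k : ℕ =>
        δ (k + 1) / δ (k + 2) * ((N (k + 2) : ℝ) * δ (k + 2) ^ v)⁻¹)) :
    ENNReal.ofReal v₀ ≤ dimH (⋂ k : ℕ, ⋂ (_ : 1 ≤ k), K k) := by
  have h :
      IsNestedIntervalScheme (fun k => N (k + 1)) (fun k => δ (k + 1)) (fun k => a (k + 1)) :=
    { N_pos := fun k => hN _ k.succ_pos
      δ_pos := fun k => hδ _ k.succ_pos
      pairwise_disjoint := fun k => hdisj _ k.succ_pos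
      dvd_succ := fun k => hdvd _ k.succ_pos
      card_children := fun k => hsub _ k.succ_pos }
  have hE :
      ⋂ k, level (fun k => a (k + 1)) (fun k => δ (k + 1)) k ⊆ ⋂ k, ⋂ (_ : 1 ≤ k), K k := by
    refine subset_iInter₂ fun k hk x hx => ?_
    obtain ⟨m, rfl⟩ := Nat.exists_eq_add_of_le' hk
    rw [hK _ hk]
    exact mem_iInter.1 hx m
  refine le_of_forall_lt_imp_le_of_dense fun c hc => ?_
  lift c to ℝ≥0 using hc.ne_top
  exact (h.le_dimH_iInter_level (hsum c (ENNReal.coe_lt_ofReal.1 hc))).trans (dimH_mono hE)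

/-- Eggleston's lemma.  For `k ≥ 1`, `K k` is the union of `N k` pairwise disjoint
closed intervals `[a k i, a k i + δ k]` of length `δ k`, and each interval of `K k`
contains exactly `N (k+1) / N k` of the (pairwise disjoint) intervals of `K (k+1)`.
If `v₀ ∈ (0,1]` is such that for every `v < v₀` the series
`Σ_{k≥2} (δ_{k-1}/δ_k)·(N_k·δ_k^v)⁻¹` converges, then the Hausdorff dimension of
`⋂_{k≥1} K k` is at least `v₀`. -/
theorem statement19 (N : ℕ → ℕ) (δ : ℕ → ℝ) (a : (k : ℕ) → Fin (N k) → ℝ)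
    (K : ℕ → Set ℝ)
    (hN : ∀ k, 1 ≤ k → 0 < N k) (hδ : ∀ k, 1 ≤ k → 0 < δ k)
    (hK : ∀ k, 1 ≤ k → K k = ⋃ i : Fin (N k), Set.Icc (a k i) (a k i + δ k))
    (hdisj : ∀ k, 1 ≤ k → ∀ i j : Fin (N k), i ≠ j →
      Disjoint (Set.Icc (a k i) (a k i + δ k)) (Set.Icc (a k j) (a k j + δ k)))
    (hdvd : ∀ k, 1 ≤ k → N k ∣ N (k + 1))
    (hsub : ∀ k, 1 ≤ k → ∀ i : Fin (N k),
      Nat.card {j : Fin (N (k + 1)) //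
          Set.Icc (a (k + 1) j) (a (k + 1) j + δ (k + 1)) ⊆
            Set.Icc (a k i) (a k i + δ k)} = N (k + 1) / N k)
    (v₀ : ℝ) (hv₀ : 0 < v₀) (hv₀1 : v₀ ≤ 1)
    (hsum : ∀ v : ℝ, v < v₀ →
      Summable (fun k : ℕ =>
        δ (k + 1) / δ (k + 2) * ((N (k + 2) : ℝ) * δ (k + 2) ^ v)⁻¹)) :
    ENNReal.ofReal v₀ ≤ dimH (⋂ k : ℕ, ⋂ (_ : 1 ≤ k), K k) :=
  statement19_general N δ a K hN hδ hK hdisj hdvd hsub v₀ hsum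
end
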